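/- arXiv:1812.08225 — 5 statements merged into one kernel-verified Lean document; each statement's English description precedes it below -/
import Mathlib

section
/- Let κ ∈ ℝ, let U be an open subset of EuclideanSpace ℝ (Fin 2), and let h : EuclideanSpace ℝ (Fin 2) → ℝ be C² on U with h(x) > 0 for every x ∈ U. Assume that for every harmonic function v : EuclideanSpace ℝ (Fin 2) → ℝ (i.e. v is C² and Δ v = 0 everywhere) and every x ∈ U one has Δ(fun z => h z * ‖∇v(z)‖²)(x) ≥ 2·κ·‖∇v(x)‖². Then for every x ∈ U one has Δh(x)/h(x) − ‖∇h(x)‖²/h(x)² ≥ 2·κ/h(x). -/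
open scoped Gradient

/-- The Laplacian of a real-valued function on Euclidean space: the trace of the
second derivative, computed in the standard orthonormal basis. -/
noncomputable def lap {n : ℕ} (f : EuclideanSpace ℝ (Fin n) → ℝ)
    (x : EuclideanSpace ℝ (Fin n)) : ℝ :=
  ∑ i : Fin n, iteratedFDeriv ℝ 2 f x
    ![EuclideanSpace.single i (1 : ℝ), EuclideanSpace.single i (1 : ℝ)]

namespace SmoothAux

noncomputable abbrev ee (i : Fin 2) : EuclideanSpace ℝ (Fin 2) := EuclideanSpace.single i (1:ℝ)
noncomputable abbrev P (i : Fin 2) : EuclideanSpace ℝ (Fin 2) →L[ℝ] ℝ := EuclideanSpace.proj i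

lemma inner_gradient (f : EuclideanSpace ℝ (Fin 2) → ℝ) (x m : EuclideanSpace ℝ (Fin 2)) :
    @inner ℝ _ _ (∇ f x) m = fderiv ℝ f x m := by
  rw [gradient, ← InnerProductSpace.toDual_apply_apply, (InnerProductSpace.toDual ℝ _).apply_symm_apply]

lemma gradient_apply (f : EuclideanSpace ℝ (Fin 2) → ℝ) (x : EuclideanSpace ℝ (Fin 2)) (i : Fin 2) :
    ∇ f x i = fderiv ℝ f x (ee i) := by
  rw [← inner_gradient, real_inner_comm, ee, EuclideanSpace.inner_single_left]
  simp

lemma norm_sq_eq (y : EuclideanSpace ℝ (Fin 2)) : ‖y‖ ^ 2 = y 0 ^ 2 + y 1 ^ 2 := by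
  rw [← real_inner_self_eq_norm_sq, PiLp.inner_apply]
  simp [Fin.sum_univ_two, RCLike.inner_apply]

lemma norm_grad_sq (f : EuclideanSpace ℝ (Fin 2) → ℝ) (x : EuclideanSpace ℝ (Fin 2)) :
    ‖∇ f x‖ ^ 2 = fderiv ℝ f x (ee 0) ^ 2 + fderiv ℝ f x (ee 1) ^ 2 := by
  rw [norm_sq_eq, gradient_apply, gradient_apply]

lemma lap_eq (f : EuclideanSpace ℝ (Fin 2) → ℝ) (x : EuclideanSpace ℝ (Fin 2))
    (hf : ContDiffAt ℝ 2 f x) :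
    lap f x = ∑ i : Fin 2, fderiv ℝ (fun y => fderiv ℝ f y (ee i)) x (ee i) := by
  have hd : DifferentiableAt ℝ (fderiv ℝ f) x :=
    (hf.fderiv_right (m := 1) le_rfl).differentiableAt one_ne_zero
  unfold lap
  refine Finset.sum_congr rfl fun i _ => ?_
  rw [iteratedFDeriv_two_apply]
  rw [fderiv_clm_apply hd (differentiableAt_const _)]
  simp

lemma lap_mul (f g : EuclideanSpace ℝ (Fin 2) → ℝ) (x : EuclideanSpace ℝ (Fin 2))
    (hf : ContDiffAt ℝ 2 f x) (hg : ContDiffAt ℝ 2 g x) :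
    lap (fun z => f z * g z) x = f x * lap g x
      + 2 * (fderiv ℝ f x (ee 0) * fderiv ℝ g x (ee 0)
           + fderiv ℝ f x (ee 1) * fderiv ℝ g x (ee 1)) + g x * lap f x := by
  have h2 : (2 : WithTop ℕ∞) ≠ 0 := two_ne_zero
  have dfx : DifferentiableAt ℝ f x := hf.differentiableAt h2
  have dgx : DifferentiableAt ℝ g x := hg.differentiableAt h2
  have hev : ∀ᶠ y in nhds x, DifferentiableAt ℝ f y ∧ DifferentiableAt ℝ g y :=
    ((hf.eventually (by simp)).and (hg.eventually (by simp))).mono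
      (fun y hy => ⟨hy.1.differentiableAt h2, hy.2.differentiableAt h2⟩)
  have key : ∀ i : Fin 2,
      fderiv ℝ (fun y => fderiv ℝ (fun z => f z * g z) y (ee i)) x (ee i)
        = f x * fderiv ℝ (fun y => fderiv ℝ g y (ee i)) x (ee i)
          + 2 * (fderiv ℝ f x (ee i) * fderiv ℝ g x (ee i))
          + g x * fderiv ℝ (fun y => fderiv ℝ f y (ee i)) x (ee i) := by
    intro i
    have dfd : DifferentiableAt ℝ (fun y => fderiv ℝ g y (ee i)) x :=
      ((hg.fderiv_right (m := 1) le_rfl).differentiableAt one_ne_zero).clm_apply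
        (differentiableAt_const _)
    have dfd' : DifferentiableAt ℝ (fun y => fderiv ℝ f y (ee i)) x :=
      ((hf.fderiv_right (m := 1) le_rfl).differentiableAt one_ne_zero).clm_apply
        (differentiableAt_const _)
    have heq : (fun y => fderiv ℝ (fun z => f z * g z) y (ee i))
        =ᶠ[nhds x] fun y => f y * fderiv ℝ g y (ee i) + g y * fderiv ℝ f y (ee i) := by
      filter_upwards [hev] with y hy
      rw [fderiv_fun_mul hy.1 hy.2]
      simp [smul_eq_mul]
    rw [heq.fderiv_eq, fderiv_fun_add (dfx.fun_mul dfd) (dgx.fun_mul dfd'), fderiv_fun_mul dfx dfd,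
      fderiv_fun_mul dgx dfd']
    simp [smul_eq_mul]
    ring
  rw [lap_eq _ _ (hf.mul hg), lap_eq _ _ hg, lap_eq _ _ hf]
  simp only [Fin.sum_univ_two, key]
  ring

variable (b : EuclideanSpace ℝ (Fin 2)) (p q : ℝ)

noncomputable def AA (z : EuclideanSpace ℝ (Fin 2)) : ℝ := 1 + p * (z 0 - b 0) + q * (z 1 - b 1)
noncomputable def BB (z : EuclideanSpace ℝ (Fin 2)) : ℝ := q * (z 0 - b 0) - p * (z 1 - b 1)
noncomputable def vv (z : EuclideanSpace ℝ (Fin 2)) : ℝ :=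
  (z 0 - b 0) + p/2 * ((z 0 - b 0) * (z 0 - b 0))
    + q * ((z 0 - b 0) * (z 1 - b 1)) - p/2 * ((z 1 - b 1) * (z 1 - b 1))
noncomputable def ww (z : EuclideanSpace ℝ (Fin 2)) : ℝ := AA b p q z ^ 2 + BB b p q z ^ 2

lemma hs (z : EuclideanSpace ℝ (Fin 2)) :
    HasFDerivAt (fun z : EuclideanSpace ℝ (Fin 2) => z 0 - b 0) (P 0) z := by
  have h0 : HasFDerivAt (fun z : EuclideanSpace ℝ (Fin 2) => z 0) (P 0) z := (P 0).hasFDerivAt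
  exact h0.sub_const _

lemma ht (z : EuclideanSpace ℝ (Fin 2)) :
    HasFDerivAt (fun z : EuclideanSpace ℝ (Fin 2) => z 1 - b 1) (P 1) z := by
  have h0 : HasFDerivAt (fun z : EuclideanSpace ℝ (Fin 2) => z 1) (P 1) z := (P 1).hasFDerivAt
  exact h0.sub_const _

lemma hA (z : EuclideanSpace ℝ (Fin 2)) :
    HasFDerivAt (AA b p q) (p • P 0 + q • P 1) z :=
  (((hs b z).const_mul p).const_add 1).add ((ht b z).const_mul q)

lemma hB (z : EuclideanSpace ℝ (Fin 2)) :
    HasFDerivAt (BB b p q) (q • P 0 - p • P 1) z :=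
  ((hs b z).const_mul q).sub ((ht b z).const_mul p)

lemma hv (z : EuclideanSpace ℝ (Fin 2)) :
    HasFDerivAt (vv b p q) (AA b p q z • P 0 + BB b p q z • P 1) z := by
  have := (((hs b z).add (((hs b z).mul (hs b z)).const_mul (p/2))).add
    (((hs b z).mul (ht b z)).const_mul q)).sub (((ht b z).mul (ht b z)).const_mul (p/2))
  refine (this.congr_fderiv ?_).congr_of_eventuallyEq (Filter.Eventually.of_forall fun y => ?_)
  · ext y
    simp [AA, BB]
    ring
  · simp [vv]

lemma c0 : ContDiff ℝ 2 (fun z : EuclideanSpace ℝ (Fin 2) => z 0 - b 0) := by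
  have h0 : ContDiff ℝ 2 (fun z : EuclideanSpace ℝ (Fin 2) => z 0) := (P 0).contDiff
  exact h0.sub contDiff_const

lemma c1 : ContDiff ℝ 2 (fun z : EuclideanSpace ℝ (Fin 2) => z 1 - b 1) := by
  have h0 : ContDiff ℝ 2 (fun z : EuclideanSpace ℝ (Fin 2) => z 1) := (P 1).contDiff
  exact h0.sub contDiff_const

lemma cA : ContDiff ℝ 2 (AA b p q) :=
  (contDiff_const.add (contDiff_const.mul (c0 b))).add (contDiff_const.mul (c1 b))

lemma cB : ContDiff ℝ 2 (BB b p q) :=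
  (contDiff_const.mul (c0 b)).sub (contDiff_const.mul (c1 b))

lemma cv : ContDiff ℝ 2 (vv b p q) :=
  (((c0 b).add (contDiff_const.mul ((c0 b).mul (c0 b)))).add
    (contDiff_const.mul ((c0 b).mul (c1 b)))).sub (contDiff_const.mul ((c1 b).mul (c1 b)))

lemma cw : ContDiff ℝ 2 (ww b p q) :=
  ((cA b p q).pow 2).add ((cB b p q).pow 2)

lemma fderiv_vv0 (z : EuclideanSpace ℝ (Fin 2)) :
    fderiv ℝ (vv b p q) z (ee 0) = AA b p q z := by
  rw [(hv b p q z).fderiv]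
  simp [EuclideanSpace.single_apply]

lemma fderiv_vv1 (z : EuclideanSpace ℝ (Fin 2)) :
    fderiv ℝ (vv b p q) z (ee 1) = BB b p q z := by
  rw [(hv b p q z).fderiv]
  simp [EuclideanSpace.single_apply]

lemma lap_vv (z : EuclideanSpace ℝ (Fin 2)) : lap (vv b p q) z = 0 := by
  rw [lap_eq _ _ (cv b p q).contDiffAt, Fin.sum_univ_two]
  have e0 : (fun y => fderiv ℝ (vv b p q) y (ee 0)) = AA b p q := funext (fderiv_vv0 b p q)
  have e1 : (fun y => fderiv ℝ (vv b p q) y (ee 1)) = BB b p q := funext (fderiv_vv1 b p q)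
  rw [e0, e1, (hA b p q z).fderiv, (hB b p q z).fderiv]
  simp [EuclideanSpace.single_apply]

lemma norm_grad_vv (z : EuclideanSpace ℝ (Fin 2)) :
    ‖∇ (vv b p q) z‖ ^ 2 = ww b p q z := by
  rw [norm_grad_sq, fderiv_vv0, fderiv_vv1, ww]

lemma fderiv_ww0 (z : EuclideanSpace ℝ (Fin 2)) :
    fderiv ℝ (ww b p q) z (ee 0) = 2 * AA b p q z * p + 2 * BB b p q z * q := by
  have h2 := ((hA b p q z).mul (hA b p q z)).add ((hB b p q z).mul (hB b p q z))
  have hfun : ww b p q = fun y => AA b p q y * AA b p q y + BB b p q y * BB b p q y := by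
    funext y; simp [ww, pow_two]
  rw [hfun] at *
  rw [show (fun y => AA b p q y * AA b p q y + BB b p q y * BB b p q y) = AA b p q * AA b p q + BB b p q * BB b p q from rfl, h2.fderiv]
  simp [EuclideanSpace.single_apply]
  ring

lemma fderiv_ww1 (z : EuclideanSpace ℝ (Fin 2)) :
    fderiv ℝ (ww b p q) z (ee 1) = 2 * AA b p q z * q - 2 * BB b p q z * p := by
  have h2 := ((hA b p q z).mul (hA b p q z)).add ((hB b p q z).mul (hB b p q z))
  have hfun : ww b p q = fun y => AA b p q y * AA b p q y + BB b p q y * BB b p q y := by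
    funext y; simp [ww, pow_two]
  rw [hfun] at *
  rw [show (fun y => AA b p q y * AA b p q y + BB b p q y * BB b p q y) = AA b p q * AA b p q + BB b p q * BB b p q from rfl, h2.fderiv]
  simp [EuclideanSpace.single_apply]
  ring

lemma lap_ww (z : EuclideanSpace ℝ (Fin 2)) :
    lap (ww b p q) z = 4 * (p ^ 2 + q ^ 2) := by
  rw [lap_eq _ _ (cw b p q).contDiffAt, Fin.sum_univ_two]
  have e0 : (fun y => fderiv ℝ (ww b p q) y (ee 0))
      = fun y => 2 * AA b p q y * p + 2 * BB b p q y * q := funext (fderiv_ww0 b p q)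
  have e1 : (fun y => fderiv ℝ (ww b p q) y (ee 1))
      = fun y => 2 * AA b p q y * q - 2 * BB b p q y * p := funext (fderiv_ww1 b p q)
  have k0 := ((((hA b p q z).const_mul 2).mul_const p).add
    (((hB b p q z).const_mul 2).mul_const q))
  have k1 := ((((hA b p q z).const_mul 2).mul_const q).sub
    (((hB b p q z).const_mul 2).mul_const p))
  rw [e0, e1, show (fun y => 2 * AA b p q y * p + 2 * BB b p q y * q) = (fun y => 2 * AA b p q y * p) + (fun y => 2 * BB b p q y * q) from rfl,
    show (fun y => 2 * AA b p q y * q - 2 * BB b p q y * p) = (fun y => 2 * AA b p q y * q) - (fun y => 2 * BB b p q y * p) from rfl, k0.fderiv, k1.fderiv]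
  simp [EuclideanSpace.single_apply]
  ring

lemma AA_self : AA b p q b = 1 := by simp [AA]
lemma BB_self : BB b p q b = 0 := by simp [BB]

end SmoothAux

open SmoothAux

/-- If `h` is `C²` and positive on an open set `U ⊆ ℝ²` and for every harmonic function `v`
one has `Δ(h·‖∇v‖²) ≥ 2κ‖∇v‖²` on `U`, then `Δh/h − ‖∇h‖²/h² ≥ 2κ/h` on `U`. -/
theorem smooth_case_log_laplacian_bound (κ : ℝ)
    (U : Set (EuclideanSpace ℝ (Fin 2))) (hU : IsOpen U)
    (h : EuclideanSpace ℝ (Fin 2) → ℝ)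
    (hC2 : ContDiffOn ℝ 2 h U) (hpos : ∀ x ∈ U, 0 < h x)
    (hyp : ∀ v : EuclideanSpace ℝ (Fin 2) → ℝ, ContDiff ℝ 2 v →
      (∀ x, lap v x = 0) →
      ∀ x ∈ U, lap (fun z => h z * ‖∇ v z‖ ^ 2) x ≥ 2 * κ * ‖∇ v x‖ ^ 2) :
    ∀ x ∈ U, lap h x / h x - ‖∇ h x‖ ^ 2 / (h x) ^ 2 ≥ 2 * κ / h x := by
  intro b hb
  have hc : 0 < h b := hpos b hb
  have hcne : h b ≠ 0 := ne_of_gt hc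
  have hcb : ContDiffAt ℝ 2 h b := hC2.contDiffAt (hU.mem_nhds hb)
  set g0 := fderiv ℝ h b (ee 0) with hg0
  set g1 := fderiv ℝ h b (ee 1) with hg1
  set p := -g0 / (2 * h b) with hp
  set q := -g1 / (2 * h b) with hq
  have hge := hyp (vv b p q) (cv b p q) (lap_vv b p q) b hb
  have hfun : (fun z => h z * ‖∇ (vv b p q) z‖ ^ 2) = fun z => h z * ww b p q z := by
    funext z; rw [norm_grad_vv]
  rw [hfun, norm_grad_vv, lap_mul h (ww b p q) b hcb (cw b p q).contDiffAt,
    fderiv_ww0, fderiv_ww1, lap_ww] at hge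
  simp only [ww, AA_self, BB_self] at hge
  norm_num at hge
  rw [← hg0, ← hg1] at hge
  rw [norm_grad_sq h b, ← hg0, ← hg1]
  have e : h b * (4 * (p ^ 2 + q ^ 2)) + 2 * (g0 * (2 * p) + g1 * (2 * q))
      = -((g0 ^ 2 + g1 ^ 2) / h b) := by
    rw [hp, hq]; field_simp; ring
  have key : 2 * κ ≤ lap h b - (g0 ^ 2 + g1 ^ 2) / h b := by linarith
  rw [ge_iff_le, show lap h b / h b - (g0 ^ 2 + g1 ^ 2) / h b ^ 2
      = (lap h b - (g0 ^ 2 + g1 ^ 2) / h b) / h b from by field_simp]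
  exact div_le_div_of_nonneg_right key hc.le |>.trans_eq rfl
end

section
/- Let X be a metric space and let γ : [0,1] → X be a continuous closed curve, i.e. γ(0) = γ(1), whose total variation ℓ = eVariationOn γ (Set.Icc 0 1) is finite. Then for every n ≥ 1 there exist parameters t₁, …, tₙ ∈ [0,1] such that the image γ '' (Set.Icc 0 1) is contained in the union of the closed balls of radius ℓ/(2n) centered at the points γ(t₁), …, γ(tₙ). -/
open Set ENNReal

private lemma evar_small_right {X : Type*} [MetricSpace X] (f : ℝ → X) {t b : ℝ} (htb : t < b)
    (hfin : eVariationOn f (Set.Icc t b) ≠ ⊤)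
    (hcont : ContinuousWithinAt f (Set.Icc t b) t)
    {E : ℝ≥0∞} (hE : 0 < E) :
    ∃ c ∈ Set.Ioc t b, eVariationOn f (Set.Icc t c) < E := by
  set I : ℝ≥0∞ := ⨅ c ∈ Set.Ioc t b, eVariationOn f (Set.Icc t c) with hI
  have hIle : I ≤ eVariationOn f (Set.Icc t b) := biInf_le _ ⟨htb, le_rfl⟩
  have hItop : I ≠ ⊤ := fun h => hfin (top_le_iff.mp (h ▸ hIle))
  have hI0 : I = 0 := by
    by_contra h0
    have hI4 : (0:ℝ≥0∞) < I / 4 := ENNReal.div_pos h0 (by norm_num)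
    have hI4top : I / 4 ≠ ⊤ := (ENNReal.div_lt_top hItop (by norm_num)).ne
    have : I < I + I / 4 := ENNReal.lt_add_right hItop hI4.ne'
    rw [hI, iInf_lt_iff] at this
    obtain ⟨c₀, hc₀⟩ := this
    rw [iInf_lt_iff] at hc₀
    obtain ⟨hc₀m, hc₀v⟩ := hc₀
    have tail : ∀ x ∈ Set.Ioc t c₀, eVariationOn f (Set.Icc x c₀) ≤ I / 4 := by
      intro x hx
      have hxb : x ∈ Set.Ioc t b := ⟨hx.1, hx.2.trans hc₀m.2⟩
      have hadd : eVariationOn f (Set.Icc t x) + eVariationOn f (Set.Icc x c₀)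
          = eVariationOn f (Set.Icc t c₀) := by
        have := eVariationOn.Icc_add_Icc f (s := (Set.univ : Set ℝ)) hx.1.le hx.2 (Set.mem_univ x)
        simpa using this
      have hle : I + eVariationOn f (Set.Icc x c₀) ≤ I + I / 4 := by
        calc I + eVariationOn f (Set.Icc x c₀)
            ≤ eVariationOn f (Set.Icc t x) + eVariationOn f (Set.Icc x c₀) := by
              gcongr
              exact biInf_le _ hxb
          _ = eVariationOn f (Set.Icc t c₀) := hadd
          _ ≤ I + I / 4 := hc₀v.le
      exact (ENNReal.add_le_add_iff_left hItop).mp hle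
    obtain ⟨δ, hδ, hδp⟩ := Metric.tendsto_nhdsWithin_nhds.mp hcont (I/4).toReal
      (ENNReal.toReal_pos hI4.ne' hI4top)
    set c' : ℝ := min (t + δ/2) c₀ with hc'
    have hc'mem : c' ∈ Set.Ioc t c₀ :=
      ⟨lt_min (by linarith) hc₀m.1, min_le_right _ _⟩
    have hc'Icc : c' ∈ Set.Icc t b := ⟨hc'mem.1.le, hc'mem.2.trans hc₀m.2⟩
    have hc'close : edist (f c') (f t) ≤ I / 4 := by
      have hd : dist (f c') (f t) < (I/4).toReal := by
        apply hδp hc'Icc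
        have h1 : (0:ℝ) ≤ c' - t := by linarith [hc'mem.1.le]
        have h2 : c' ≤ t + δ/2 := min_le_left _ _
        rw [Real.dist_eq, abs_of_nonneg h1]
        linarith
      rw [edist_dist]
      calc ENNReal.ofReal (dist (f c') (f t)) ≤ ENNReal.ofReal ((I/4).toReal) :=
            ENNReal.ofReal_le_ofReal hd.le
        _ = I / 4 := ENNReal.ofReal_toReal hI4top
    have close : ∀ x ∈ Set.Ioc t c₀, edist (f x) (f t) ≤ I / 4 + I / 4 := by
      intro x hx
      have h1 : edist (f x) (f c') ≤ I / 4 := by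
        rcases le_total x c' with hxc | hxc
        · exact le_trans (eVariationOn.edist_le f (s := Set.Icc x c₀)
            ⟨le_rfl, hx.2⟩ ⟨hxc, hc'mem.2⟩) (tail x hx)
        · exact le_trans (eVariationOn.edist_le f (s := Set.Icc c' c₀)
            ⟨hxc, hx.2⟩ ⟨le_rfl, hc'mem.2⟩) (tail c' hc'mem)
      calc edist (f x) (f t) ≤ edist (f x) (f c') + edist (f c') (f t) := edist_triangle _ _ _
        _ ≤ I / 4 + I / 4 := add_le_add h1 hc'close
    have hbound : eVariationOn f (Set.Icc t c₀) ≤ (I / 4 + I / 4) + I / 4 := by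
      apply iSup_le
      rintro ⟨m, u, hu, us⟩
      dsimp only
      by_cases hm : u m = t
      · have hzero : ∀ i ∈ Finset.range m, edist (f (u (i+1))) (f (u i)) = 0 := by
          intro i hi
          rw [Finset.mem_range] at hi
          have h1 : u i = t := le_antisymm (hm ▸ hu (le_of_lt hi)) (us i).1
          have h2 : u (i+1) = t := le_antisymm (hm ▸ hu hi) (us (i+1)).1
          rw [h1, h2, edist_self]
        rw [Finset.sum_congr rfl hzero]
        simp
      · have hex : ∃ i, t < u i := ⟨m, lt_of_le_of_ne (us m).1 (Ne.symm hm)⟩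
        have hk : t < u (Nat.find hex) := Nat.find_spec hex
        set k := Nat.find hex with hkdef
        have hkm : k ≤ m := Nat.find_le (lt_of_le_of_ne (us m).1 (Ne.symm hm))
        have hbelow : ∀ j < k, u j = t := fun j hj =>
          le_antisymm (not_lt.mp (Nat.find_min hex hj)) (us j).1
        have hsplit : ∑ i ∈ Finset.range m, edist (f (u (i+1))) (f (u i))
            = (∑ i ∈ Finset.Ico 0 k, edist (f (u (i+1))) (f (u i)))
              + ∑ i ∈ Finset.Ico k m, edist (f (u (i+1))) (f (u i)) := by
          rw [Finset.range_eq_Ico, Finset.sum_Ico_consecutive _ (Nat.zero_le k) hkm]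
        have htail : ∑ i ∈ Finset.Ico k m, edist (f (u (i+1))) (f (u i)) ≤ I / 4 := by
          have := eVariationOn.sum_le_of_monotoneOn_Icc (f := f) (s := Set.Icc (u k) c₀)
            (u := u) (m := k) (n := m) (hu.monotoneOn _)
            (fun i hi => ⟨hu hi.1, (us i).2⟩)
          exact this.trans (tail (u k) ⟨hk, (us k).2⟩)
        have hhead : ∑ i ∈ Finset.Ico 0 k, edist (f (u (i+1))) (f (u i)) ≤ I / 4 + I / 4 := by
          rcases Nat.eq_zero_or_pos k with hk0 | hkpos
          · simp [hk0]
          · obtain ⟨k', hk'⟩ : ∃ k', k = k' + 1 := ⟨k - 1, by omega⟩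
            rw [hk', Finset.sum_Ico_succ_top (Nat.zero_le _)]
            have hzero : ∀ i ∈ Finset.Ico 0 k', edist (f (u (i+1))) (f (u i)) = 0 := by
              intro i hi
              rw [Finset.mem_Ico] at hi
              rw [hbelow i (by omega), hbelow (i+1) (by omega), edist_self]
            rw [Finset.sum_congr rfl hzero]
            simp only [Finset.sum_const_zero, zero_add]
            rw [hbelow k' (by omega)]
            have : u (k'+1) = u k := by rw [hk']
            rw [this]
            exact close (u k) ⟨hk, (us k).2⟩
        rw [hsplit]
        exact add_le_add hhead htail
    have hIc₀ : I ≤ eVariationOn f (Set.Icc t c₀) := biInf_le _ hc₀m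
    have hfinal : I ≤ (I / 4 + I / 4) + I / 4 := hIc₀.trans hbound
    have hq : (I / 4).toReal = I.toReal / 4 := by
      rw [ENNReal.toReal_div]
      norm_num
    have hx : I.toReal ≤ (I.toReal / 4 + I.toReal / 4) + I.toReal / 4 := by
      have h := ENNReal.toReal_mono (by finiteness) hfinal
      rwa [ENNReal.toReal_add (by finiteness) (by finiteness),
        ENNReal.toReal_add (by finiteness) (by finiteness), hq] at h
    have hxpos : 0 < I.toReal := ENNReal.toReal_pos h0 hItop
    linarith
  have hlt : I < E := hI0 ▸ hE
  rw [hI, iInf_lt_iff] at hlt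
  obtain ⟨c, hc⟩ := hlt
  rw [iInf_lt_iff] at hc
  obtain ⟨h1, h2⟩ := hc
  exact ⟨c, h1, h2⟩

private lemma evar_small_left {X : Type*} [MetricSpace X] (f : ℝ → X) {a t : ℝ} (hat : a < t)
    (hfin : eVariationOn f (Set.Icc a t) ≠ ⊤)
    (hcont : ContinuousWithinAt f (Set.Icc a t) t)
    {E : ℝ≥0∞} (hE : 0 < E) :
    ∃ c ∈ Set.Ico a t, eVariationOn f (Set.Icc c t) < E := by
  set g : ℝ → X := f ∘ Neg.neg with hg
  have himg : ∀ u v : ℝ, eVariationOn g (Set.Icc u v) = eVariationOn f (Set.Icc (-v) (-u)) := by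
    intro u v
    rw [hg, eVariationOn.comp_eq_of_antitoneOn f Neg.neg
      (fun x _ y _ hxy => neg_le_neg hxy), Set.image_neg_Icc]
  have hfin' : eVariationOn g (Set.Icc (-t) (-a)) ≠ ⊤ := by
    rw [himg]; simpa using hfin
  have hcont' : ContinuousWithinAt g (Set.Icc (-t) (-a)) (-t) := by
    have hmaps : Set.MapsTo Neg.neg (Set.Icc (-t) (-a)) (Set.Icc a t) := by
      intro x hx
      exact ⟨by linarith [hx.2], by linarith [hx.1]⟩
    have : ContinuousWithinAt f (Set.Icc a t) (-(-t)) := by simpa using hcont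
    exact this.comp (continuous_neg.continuousWithinAt) hmaps
  obtain ⟨c', hc'm, hc'v⟩ := evar_small_right g (by linarith : -t < -a) hfin' hcont' hE
  refine ⟨-c', ⟨by linarith [hc'm.2], by linarith [hc'm.1]⟩, ?_⟩
  rw [himg] at hc'v
  simpa using hc'v

/-- On a closed rectifiable curve of length `ℓ`, for every `n ≥ 1` one can choose `n`
points on the curve such that the image of the curve is covered by the closed balls of
radius `ℓ/(2n)` around these points. -/
theorem exists_dense_points_on_closed_curve
    {X : Type*} [MetricSpace X] (γ : ℝ → X)
    (hcont : ContinuousOn γ (Set.Icc 0 1)) (hclosed : γ 0 = γ 1)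
    (hfin : eVariationOn γ (Set.Icc 0 1) ≠ ⊤)
    (n : ℕ) (hn : 1 ≤ n) :
    ∃ t : Fin n → ℝ, (∀ i, t i ∈ Set.Icc (0 : ℝ) 1) ∧
      γ '' Set.Icc 0 1 ⊆ ⋃ i : Fin n,
        Metric.closedBall (γ (t i))
          ((eVariationOn γ (Set.Icc 0 1)).toReal / (2 * n)) := by
  set L : ℝ := (eVariationOn γ (Set.Icc 0 1)).toReal with hL
  set r : ℝ := L / (2 * n) with hr
  set v : ℝ → ℝ := fun t => (eVariationOn γ (Set.Icc 0 t)).toReal with hv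
  -- finiteness of subinterval variations
  have F0 : ∀ u w : ℝ, 0 ≤ u → w ≤ 1 → eVariationOn γ (Set.Icc u w) ≠ ⊤ := by
    intro u w hu hw
    exact fun h => hfin (top_le_iff.mp
      (h ▸ eVariationOn.mono γ (Set.Icc_subset_Icc hu hw)))
  -- additivity
  have F1 : ∀ u w : ℝ, 0 ≤ u → u ≤ w → w ≤ 1 →
      v w = v u + (eVariationOn γ (Set.Icc u w)).toReal := by
    intro u w hu huw hw
    have hadd : eVariationOn γ (Set.Icc 0 u) + eVariationOn γ (Set.Icc u w)
        = eVariationOn γ (Set.Icc 0 w) := by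
      have := eVariationOn.Icc_add_Icc γ (s := (Set.univ : Set ℝ)) hu huw (Set.mem_univ u)
      simpa using this
    rw [hv]
    dsimp only
    rw [← hadd, ENNReal.toReal_add (F0 0 u le_rfl (huw.trans hw)) (F0 u w hu hw)]
  have F2 : ∀ u w : ℝ, 0 ≤ u → u ≤ w → w ≤ 1 → v u ≤ v w := by
    intro u w hu huw hw
    rw [F1 u w hu huw hw]
    have := ENNReal.toReal_nonneg (a := eVariationOn γ (Set.Icc u w))
    linarith
  have F3 : ∀ u w : ℝ, 0 ≤ u → u ≤ w → w ≤ 1 → dist (γ u) (γ w) ≤ v w - v u := by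
    intro u w hu huw hw
    have h1 : edist (γ u) (γ w) ≤ eVariationOn γ (Set.Icc u w) :=
      eVariationOn.edist_le γ ⟨le_rfl, huw⟩ ⟨huw, le_rfl⟩
    have h2 : dist (γ u) (γ w) ≤ (eVariationOn γ (Set.Icc u w)).toReal := by
      rw [dist_edist]
      exact ENNReal.toReal_mono (F0 u w hu hw) h1
    rw [F1 u w hu huw hw]
    linarith
  have F3' : ∀ u w : ℝ, u ∈ Set.Icc (0:ℝ) 1 → w ∈ Set.Icc (0:ℝ) 1 →
      dist (γ u) (γ w) ≤ |v w - v u| := by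
    intro u w hu hw
    rcases le_total u w with h | h
    · exact (F3 u w hu.1 h hw.2).trans (le_abs_self _)
    · rw [dist_comm, abs_sub_comm]
      exact (F3 w u hw.1 h hu.2).trans (le_abs_self _)
  have Fv0 : v 0 = 0 := by
    rw [hv]
    dsimp only
    rw [Set.Icc_self, eVariationOn.subsingleton γ Set.subsingleton_singleton]
    simp
  have Fv1 : v 1 = L := rfl
  -- the intermediate value property
  have F5 : ∀ y : ℝ, 0 ≤ y → y ≤ L → ∃ s ∈ Set.Icc (0:ℝ) 1, v s = y := by
    intro y hy0 hyL
    set T : Set ℝ := {s | s ∈ Set.Icc (0:ℝ) 1 ∧ v s ≤ y} with hT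
    have h0T : (0:ℝ) ∈ T := ⟨⟨le_rfl, zero_le_one⟩, by rw [Fv0]; exact hy0⟩
    have hTne : T.Nonempty := ⟨0, h0T⟩
    have hTbdd : BddAbove T := ⟨1, fun s hs => hs.1.2⟩
    set s₀ : ℝ := sSup T with hs₀
    have hs₀0 : 0 ≤ s₀ := le_csSup hTbdd h0T
    have hs₀1 : s₀ ≤ 1 := csSup_le hTne (fun s hs => hs.1.2)
    refine ⟨s₀, ⟨hs₀0, hs₀1⟩, ?_⟩
    have hle : v s₀ ≤ y := by
      by_contra hlt
      push_neg at hlt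
      have hs₀pos : 0 < s₀ := by
        rcases eq_or_lt_of_le hs₀0 with h | h
        · exfalso; rw [← h, Fv0] at hlt; exact absurd hy0 (not_le.mpr hlt)
        · exact h
      obtain ⟨c, hcm, hcv⟩ := evar_small_left γ hs₀pos (F0 0 s₀ le_rfl hs₀1)
        ((hcont s₀ ⟨hs₀0, hs₀1⟩).mono (Set.Icc_subset_Icc le_rfl hs₀1))
        (E := ENNReal.ofReal (v s₀ - y)) (by rwa [ENNReal.ofReal_pos, sub_pos])
      have hcr : (eVariationOn γ (Set.Icc c s₀)).toReal < v s₀ - y := by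
        rw [← ENNReal.lt_ofReal_iff_toReal_lt (F0 c s₀ hcm.1 hs₀1)]
        exact hcv
      obtain ⟨s, hsT, hcs⟩ := exists_lt_of_lt_csSup hTne hcm.2
      have hss₀ : s ≤ s₀ := le_csSup hTbdd hsT
      have hvs : v s₀ ≤ v s + (eVariationOn γ (Set.Icc c s₀)).toReal := by
        rw [F1 s s₀ (hsT.1.1) hss₀ hs₀1]
        have : eVariationOn γ (Set.Icc s s₀) ≤ eVariationOn γ (Set.Icc c s₀) :=
          eVariationOn.mono γ (Set.Icc_subset_Icc hcs.le le_rfl)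
        have := ENNReal.toReal_mono (F0 c s₀ hcm.1 hs₀1) this
        linarith
      have : v s₀ < v s + (v s₀ - y) := by linarith
      have : y < v s := by linarith
      exact absurd hsT.2 (not_le.mpr this)
    rcases eq_or_lt_of_le hle with h | hlt
    · exact h
    · exfalso
      have hs₀lt1 : s₀ < 1 := by
        rcases eq_or_lt_of_le hs₀1 with h | h
        · exfalso; rw [h, Fv1] at hlt; exact absurd hyL (not_le.mpr hlt)
        · exact h
      obtain ⟨c, hcm, hcv⟩ := evar_small_right γ hs₀lt1 (F0 s₀ 1 hs₀0 le_rfl)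
        ((hcont s₀ ⟨hs₀0, hs₀1⟩).mono (Set.Icc_subset_Icc hs₀0 le_rfl))
        (E := ENNReal.ofReal (y - v s₀)) (by rwa [ENNReal.ofReal_pos, sub_pos])
      have hcr : (eVariationOn γ (Set.Icc s₀ c)).toReal < y - v s₀ := by
        rw [← ENNReal.lt_ofReal_iff_toReal_lt (F0 s₀ c hs₀0 hcm.2)]
        exact hcv
      have hvc : v c ≤ y := by
        rw [F1 s₀ c hs₀0 hcm.1.le hcm.2]
        linarith
      have : c ≤ s₀ := le_csSup hTbdd ⟨⟨hs₀0.trans hcm.1.le, hcm.2⟩, hvc⟩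
      exact absurd hcm.1 (not_lt.mpr this)
  -- basic facts about L and r
  have hL0 : 0 ≤ L := ENNReal.toReal_nonneg
  have hn0 : (0:ℝ) < 2 * n := by positivity
  have hr0 : 0 ≤ r := by rw [hr]; positivity
  have hLr : L = 2 * n * r := by
    rw [hr]; field_simp
  -- choose the points
  have hptsel : ∀ i : Fin n, ∃ s ∈ Set.Icc (0:ℝ) 1, v s = (2 * (i:ℕ) + 1) * r := by
    intro i
    apply F5
    · positivity
    · rw [hLr]
      have h1 : ((i:ℕ):ℝ) + 1 ≤ (n:ℝ) := by exact_mod_cast Nat.succ_le_of_lt i.2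
      have h2 : (2 * (i:ℕ) + 1 : ℝ) ≤ 2 * n := by push_cast; linarith
      exact mul_le_mul_of_nonneg_right h2 hr0
  choose t ht hvt using hptsel
  refine ⟨t, ht, ?_⟩
  rintro x ⟨s, hs, rfl⟩
  -- find the right index
  have hvs0 : 0 ≤ v s := by rw [← Fv0]; exact F2 0 s le_rfl hs.1 hs.2
  have hvsL : v s ≤ L := by rw [← Fv1]; exact F2 s 1 hs.1 hs.2 le_rfl
  have key : ∃ i : Fin n, |v s - (2 * (i:ℕ) + 1) * r| ≤ r := by
    rcases eq_or_lt_of_le hr0 with hr0' | hrpos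
    · refine ⟨⟨0, hn⟩, ?_⟩
      have hL0' : L = 0 := by rw [hLr, ← hr0', mul_zero]
      have : v s = 0 := le_antisymm (hL0' ▸ hvsL) hvs0
      simp [this, ← hr0']
    · set k : ℕ := ⌊v s / (2 * r)⌋₊ with hk
      set i : ℕ := min k (n - 1) with hi
      have hin : i < n := by omega
      have hik : (i:ℝ) ≤ v s / (2 * r) := by
        have h1 : (i:ℝ) ≤ (k:ℝ) := by exact_mod_cast Nat.cast_le.mpr (min_le_left _ _)
        exact h1.trans (Nat.floor_le (by positivity))
      have hlow : 2 * i * r ≤ v s := by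
        have := mul_le_mul_of_nonneg_right hik (by linarith : (0:ℝ) ≤ 2 * r)
        rw [div_mul_cancel₀] at this
        · linarith
        · positivity
      have hhigh : v s ≤ (2 * i + 2) * r := by
        rcases le_or_gt k (n-1) with hkn | hkn
        · have hik2 : i = k := by omega
          have := Nat.lt_floor_add_one (v s / (2 * r))
          rw [← hk] at this
          have h2 : v s < ((k:ℝ) + 1) * (2 * r) := by
            have h3 := mul_lt_mul_of_pos_right this (by positivity : (0:ℝ) < 2 * r)
            rwa [div_mul_cancel₀ _ (ne_of_gt (by positivity : (0:ℝ) < 2 * r))] at h3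
          rw [hik2]
          push_cast
          nlinarith
        · have hin1 : i = n - 1 := by omega
          have h2 : (2 * i + 2 : ℝ) = 2 * n := by
            rw [hin1]
            have : (1:ℕ) ≤ n := hn
            push_cast [Nat.cast_sub this]
            ring
          rw [h2, ← hLr]
          exact hvsL
      refine ⟨⟨i, hin⟩, ?_⟩
      rw [abs_le]
      constructor <;> [skip; skip] <;> simp only [Fin.val_mk] <;> nlinarith
  obtain ⟨i, hi⟩ := key
  apply Set.mem_iUnion.mpr ⟨i, ?_⟩
  rw [Metric.mem_closedBall]
  calc dist (γ s) (γ (t i)) ≤ |v (t i) - v s| := F3' s (t i) hs (ht i)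
    _ = |v s - (2 * (i:ℕ) + 1) * r| := by rw [hvt i, abs_sub_comm]
    _ ≤ r := hi
end

section
/- Let X be a metric space, μ a Borel measure on X, and suppose there exist constants C > 0 and s₀ > 0 such that μ(Metric.closedBall x s) ≤ C·s² for every x ∈ X and every 0 < s ≤ s₀. Let γ : [0,1] → X be a continuous closed curve (γ(0) = γ(1)) with finite positive total variation ℓ = eVariationOn γ (Set.Icc 0 1), and let S = γ '' (Set.Icc 0 1) be its image. Then liminf_{r → 0⁺} μ(Metric.thickening r S)/r ≤ 2·C·ℓ. -/
open scoped ENNReal Topology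

lemma evar_cont_right {X : Type*} [PseudoEMetricSpace X] (f : ℝ → X) {a b : ℝ}
    (hfin : eVariationOn f (Set.Icc a b) ≠ ⊤)
    (hcont : ContinuousOn f (Set.Icc a b)) {t : ℝ} (ht : t ∈ Set.Icc a b)
    {ε : ℝ≥0∞} (hε : 0 < ε) :
    ∃ δ > (0:ℝ), ∀ w ∈ Set.Icc a b, t ≤ w → w ≤ t + δ →
      eVariationOn f (Set.Icc t w) ≤ ε := by
  rcases eq_or_ne ε ⊤ with rfl | hεtop
  · exact ⟨1, one_pos, fun w _ _ _ => le_top⟩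
  set V : ℝ≥0∞ := eVariationOn f (Set.Icc t b) with hV
  have hVfin : V ≠ ⊤ := by
    refine fun h => hfin (top_le_iff.1 ?_)
    rw [← h]
    exact eVariationOn.mono f (Set.Icc_subset_Icc ht.1 le_rfl)
  set ε' : ℝ≥0∞ := ε / 2 with hε'
  have hε'0 : 0 < ε' := ENNReal.div_pos hε.ne' (by norm_num)
  have hε'top : ε' ≠ ⊤ := by simp [hε', ENNReal.div_eq_top, hεtop]
  have hε'ε : ε' + ε' = ε := ENNReal.add_halves ε
  rcases le_or_gt V ε' with hVε | hVε
  · refine ⟨1, one_pos, fun w hw htw _ => ?_⟩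
    calc eVariationOn f (Set.Icc t w) ≤ V :=
          eVariationOn.mono f (Set.Icc_subset_Icc le_rfl hw.2)
      _ ≤ ε' := hVε
      _ ≤ ε := by rw [← hε'ε]; exact le_self_add
  -- main case
  have h1 : V - ε' < V := ENNReal.sub_lt_self hVfin (hε'0.trans hVε).ne' hε'0.ne'
  have h1' : V - ε' < ⨆ p : ℕ × {u : ℕ → ℝ // Monotone u ∧ ∀ i, u i ∈ Set.Icc t b},
      ∑ i ∈ Finset.range p.1, edist (f (p.2.1 (i+1))) (f (p.2.1 i)) := h1
  obtain ⟨⟨n₀, u₀, hu₀, us₀⟩, hsum₀⟩ := lt_iSup_iff.mp h1'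
  simp only at hsum₀
  have htb : t ≤ b := ht.2
  -- prepend t
  set u : ℕ → ℝ := fun i => if i = 0 then t else u₀ (i - 1) with hudef
  set n : ℕ := n₀ + 1 with hn
  have hu : Monotone u := by
    apply monotone_nat_of_le_succ
    intro i
    cases i with
    | zero => simpa [hudef] using (us₀ 0).1
    | succ j => simp only [hudef, Nat.succ_ne_zero, if_false, Nat.add_sub_cancel]
                exact hu₀ (by omega)
  have us : ∀ i, u i ∈ Set.Icc t b := by
    intro i
    cases i with
    | zero => simpa [hudef] using htb
    | succ j => simpa [hudef] using us₀ j
  have hu0 : u 0 = t := by simp [hudef]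
  have hsum : V - ε' < ∑ i ∈ Finset.range n, edist (f (u (i+1))) (f (u i)) := by
    refine hsum₀.trans_le ?_
    rw [hn, Finset.sum_range_succ']
    refine le_trans (le_of_eq ?_) le_self_add
    apply Finset.sum_congr rfl
    intro i _
    simp [hudef]
  -- u n > t
  have hVε'pos : 0 < V - ε' := tsub_pos_iff_lt.mpr hVε
  have htn : t < u n := by
    rcases lt_or_ge t (u n) with h | h
    · exact h
    · exfalso
      have hun : u n = t := le_antisymm h (us n).1
      have : ∀ i ∈ Finset.range n, edist (f (u (i+1))) (f (u i)) = 0 := by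
        intro i hi
        simp only [Finset.mem_range] at hi
        have h1 : u (i+1) = t := le_antisymm (hun ▸ hu (by omega)) (us _).1
        have h2 : u i = t := le_antisymm (hun ▸ hu (by omega)) (us _).1
        rw [h1, h2, edist_self]
      rw [Finset.sum_congr rfl this, Finset.sum_const_zero] at hsum
      exact absurd hsum (by simp)
  have hex : ∃ i, t < u i := ⟨n, htn⟩
  set k : ℕ := Nat.find hex with hkdef
  have hk : t < u k := Nat.find_spec hex
  have hkmin : ∀ i < k, u i = t := fun i hi =>
    le_antisymm (not_lt.mp (Nat.find_min hex hi)) (us i).1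
  have hk1 : 1 ≤ k := by
    by_contra h
    push_neg at h
    interval_cases k
    · exact absurd hk (by rw [hu0]; exact lt_irrefl t)
  have hkn : k ≤ n := Nat.find_le htn
  -- continuity at t
  have hc : Filter.Tendsto f (𝓝[Set.Icc a b] t) (𝓝 (f t)) := hcont t ht
  have hev : ∀ᶠ w in 𝓝[Set.Icc a b] t, edist (f w) (f t) < ε' :=
    EMetric.tendsto_nhds.mp hc ε' hε'0
  obtain ⟨δ₀, hδ₀, hballδ⟩ := Metric.mem_nhdsWithin_iff.mp hev
  refine ⟨min (δ₀/2) ((u k - t)/2), lt_min (by positivity) (by linarith), fun w hw htw hwδ => ?_⟩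
  have hwk : w < u k := by
    have : w ≤ t + (u k - t)/2 := hwδ.trans (by gcongr; exact min_le_right _ _)
    linarith [hk]
  have hwδ₀ : dist w t < δ₀ := by
    rw [Real.dist_eq, abs_of_nonneg (by linarith)]
    have : w ≤ t + δ₀/2 := hwδ.trans (by gcongr; exact min_le_left _ _)
    linarith
  have hedist : edist (f w) (f t) < ε' := hballδ ⟨Metric.mem_ball.mpr hwδ₀, hw⟩
  have hwb : w ≤ b := hw.2
  -- the shifted partition q for Icc w b
  set d : ℕ := n - k with hd
  set q : ℕ → ℝ := fun i => Nat.casesOn i w (fun j => u (k + j)) with hqdef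
  have hqmono : Monotone q := by
    apply monotone_nat_of_le_succ
    intro i
    cases i with
    | zero => simpa [hqdef] using hwk.le
    | succ j => exact hu (by omega)
  have hqmem : ∀ i, q i ∈ Set.Icc w b := by
    intro i
    cases i with
    | zero => simpa [hqdef] using hwb
    | succ j =>
        simp only [hqdef, Nat.succ_ne_zero, if_false]
        constructor
        · exact le_trans hwk.le (hu (by omega))
        · exact (us _).2
  have hqsum_le : ∑ i ∈ Finset.range (d + 1), edist (f (q (i+1))) (f (q i))
      ≤ eVariationOn f (Set.Icc w b) :=
    eVariationOn.sum_le (f := f) (n := d+1) hqmono hqmem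
  set R : ℝ≥0∞ := ∑ i ∈ Finset.range d, edist (f (u (k+i+1))) (f (u (k+i))) with hR
  have hqsum_eq : ∑ i ∈ Finset.range (d + 1), edist (f (q (i+1))) (f (q i))
      = R + edist (f (u k)) (f w) := by
    rw [Finset.sum_range_succ']
    rfl
  have htotal : ∑ i ∈ Finset.range n, edist (f (u (i+1))) (f (u i))
      = edist (f (u k)) (f t) + R := by
    have hnk : n = k + d := by omega
    rw [hnk, Finset.sum_range_add]
    congr 1
    · -- sum over range k equals the single term at k-1
      rw [Finset.sum_eq_single_of_mem (k-1) (Finset.mem_range.mpr (by omega))]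
      · have hkk : k - 1 + 1 = k := by omega
        rw [hkk, hkmin (k-1) (by omega)]
      · intro i hi hik
        simp only [Finset.mem_range] at hi
        rw [hkmin i (by omega), hkmin (i+1) (by omega), edist_self]
  have htri : edist (f (u k)) (f t) ≤ edist (f (u k)) (f w) + edist (f w) (f t) :=
    edist_triangle _ _ _
  have hVw : V - ε' < eVariationOn f (Set.Icc w b) + ε' := by
    calc V - ε' < ∑ i ∈ Finset.range n, edist (f (u (i+1))) (f (u i)) := hsum
      _ = edist (f (u k)) (f t) + R := htotal
      _ ≤ (edist (f (u k)) (f w) + edist (f w) (f t)) + R := by gcongr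
      _ = (R + edist (f (u k)) (f w)) + edist (f w) (f t) := by ring
      _ ≤ eVariationOn f (Set.Icc w b) + ε' := by
          rw [hqsum_eq] at hqsum_le
          exact add_le_add hqsum_le hedist.le
  have hVlt : V < eVariationOn f (Set.Icc w b) + ε' + ε' :=
    (ENNReal.sub_lt_iff_lt_right hε'top hVε.le).mp hVw
  have hsplit : eVariationOn f (Set.Icc t w) + eVariationOn f (Set.Icc w b) = V := by
    have := eVariationOn.Icc_add_Icc f htw hwb (show w ∈ Set.Icc t b from ⟨htw, hwb⟩)
    rwa [Set.inter_eq_self_of_subset_right (Set.Icc_subset_Icc le_rfl hwb),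
      Set.inter_eq_self_of_subset_right (Set.Icc_subset_Icc htw le_rfl),
      Set.inter_self] at this
  have hVwfin : eVariationOn f (Set.Icc w b) ≠ ⊤ := by
    refine fun h => hVfin (top_le_iff.1 ?_)
    rw [← h]
    exact eVariationOn.mono f (Set.Icc_subset_Icc htw le_rfl)
  have : eVariationOn f (Set.Icc t w) + eVariationOn f (Set.Icc w b)
      < ε + eVariationOn f (Set.Icc w b) := by
    rw [hsplit]
    calc V < eVariationOn f (Set.Icc w b) + ε' + ε' := hVlt
      _ = ε + eVariationOn f (Set.Icc w b) := by rw [add_assoc, hε'ε, add_comm]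
  exact le_of_lt ((ENNReal.add_lt_add_iff_right hVwfin).mp this)

lemma evar_cont_left {X : Type*} [PseudoEMetricSpace X] (f : ℝ → X) {a b : ℝ}
    (hfin : eVariationOn f (Set.Icc a b) ≠ ⊤)
    (hcont : ContinuousOn f (Set.Icc a b)) {t : ℝ} (ht : t ∈ Set.Icc a b)
    {ε : ℝ≥0∞} (hε : 0 < ε) :
    ∃ δ > (0:ℝ), ∀ w ∈ Set.Icc a b, w ≤ t → t ≤ w + δ →
      eVariationOn f (Set.Icc w t) ≤ ε := by
  set φ : ℝ → ℝ := fun x => a + b - x with hφ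
  have hφanti : ∀ s : Set ℝ, AntitoneOn φ s := fun s x _ y _ hxy => by
    simp only [hφ]; linarith
  have himg : ∀ c d : ℝ, φ '' Set.Icc c d = Set.Icc (a + b - d) (a + b - c) := fun c d => by
    simp only [hφ]
    exact Set.image_const_sub_Icc _ _ _
  have himgab : φ '' Set.Icc a b = Set.Icc a b := by
    rw [himg]
    norm_num
  have hgeq : ∀ c d : ℝ, eVariationOn (f ∘ φ) (Set.Icc c d)
      = eVariationOn f (Set.Icc (a + b - d) (a + b - c)) := fun c d => by
    rw [eVariationOn.comp_eq_of_antitoneOn f φ (hφanti _), himg]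
  have hgfin : eVariationOn (f ∘ φ) (Set.Icc a b) ≠ ⊤ := by
    rw [eVariationOn.comp_eq_of_antitoneOn f φ (hφanti _), himgab]
    exact hfin
  have hφcont : ContinuousOn φ (Set.Icc a b) := (by fun_prop : Continuous φ).continuousOn
  have hgcont : ContinuousOn (f ∘ φ) (Set.Icc a b) := by
    apply hcont.comp hφcont
    intro x hx
    rw [← himgab]
    exact Set.mem_image_of_mem φ hx
  have ht' : a + b - t ∈ Set.Icc a b := ⟨by linarith [ht.2], by linarith [ht.1]⟩
  obtain ⟨δ, hδ, hδP⟩ := evar_cont_right (f ∘ φ) hgfin hgcont ht' hε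
  refine ⟨δ, hδ, fun w hw hwt htw => ?_⟩
  have hw' : a + b - w ∈ Set.Icc a b := ⟨by linarith [hw.2], by linarith [hw.1]⟩
  have h1 : a + b - t ≤ a + b - w := by linarith
  have h2 : a + b - w ≤ a + b - t + δ := by linarith
  have := hδP (a + b - w) hw' h1 h2
  rw [hgeq] at this
  convert this using 3 <;> ring

lemma evar_continuousOn {X : Type*} [PseudoEMetricSpace X] (f : ℝ → X) {a b : ℝ}
    (hfin : eVariationOn f (Set.Icc a b) ≠ ⊤)
    (hcont : ContinuousOn f (Set.Icc a b)) :
    ContinuousOn (fun t => eVariationOn f (Set.Icc a t)) (Set.Icc a b) := by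
  intro t ht
  set v : ℝ → ℝ≥0∞ := fun x => eVariationOn f (Set.Icc a x) with hv
  have hvmono : Monotone v := fun x y hxy =>
    eVariationOn.mono f (Set.Icc_subset_Icc le_rfl hxy)
  have hvfin : ∀ x, x ≤ b → v x ≠ ⊤ := fun x hx h =>
    hfin (top_le_iff.1 (h ▸ eVariationOn.mono f (Set.Icc_subset_Icc le_rfl hx)))
  have hmem : ∀ δ : ℝ, 0 < δ → ∀ᶠ w in 𝓝[Set.Icc a b] t, dist w t < δ ∧ w ∈ Set.Icc a b := by
    intro δ hδ
    refine Filter.Eventually.and ?_ self_mem_nhdsWithin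
    exact Filter.Eventually.filter_mono nhdsWithin_le_nhds
      (Metric.eventually_nhds_iff.2 ⟨δ, hδ, fun {y} h => h⟩)
  apply tendsto_order.2
  constructor
  · intro c hc
    obtain ⟨r, hr0, hrc⟩ := ENNReal.lt_iff_exists_add_pos_lt.mp hc
    have hr0' : (0:ℝ≥0∞) < r := by exact_mod_cast hr0
    obtain ⟨δ, hδ, hδP⟩ := evar_cont_left f hfin hcont ht hr0'
    filter_upwards [hmem δ hδ] with w hw
    rcases le_or_gt t w with h | h
    · exact lt_of_lt_of_le (lt_of_le_of_lt le_self_add hrc) (hvmono h)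
    · have hsplit : v w + eVariationOn f (Set.Icc w t) = v t := by
        have := eVariationOn.Icc_add_Icc f (show a ≤ w from hw.2.1) h.le
          (show w ∈ Set.Icc a b from hw.2)
        rwa [Set.inter_eq_self_of_subset_right (Set.Icc_subset_Icc le_rfl hw.2.2),
          Set.inter_eq_self_of_subset_right (Set.Icc_subset_Icc hw.2.1 ht.2),
          Set.inter_eq_self_of_subset_right (Set.Icc_subset_Icc le_rfl ht.2)] at this
      have hW : eVariationOn f (Set.Icc w t) ≤ r := by
        apply hδP w hw.2 h.le
        have : dist w t < δ := hw.1
        rw [Real.dist_eq, abs_of_nonpos (by linarith)] at this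
        linarith
      have : v t ≤ v w + r := by
        rw [← hsplit]; exact add_le_add le_rfl hW
      have hcr : c + r < v w + r := lt_of_lt_of_le hrc this
      exact (ENNReal.add_lt_add_iff_right ENNReal.coe_ne_top).mp hcr
  · intro c hc
    obtain ⟨r, hr0, hrc⟩ := ENNReal.lt_iff_exists_add_pos_lt.mp hc
    have hr0' : (0:ℝ≥0∞) < r := by exact_mod_cast hr0
    obtain ⟨δ, hδ, hδP⟩ := evar_cont_right f hfin hcont ht hr0'
    filter_upwards [hmem δ hδ] with w hw
    rcases le_or_gt w t with h | h
    · exact lt_of_le_of_lt (hvmono h) (lt_of_le_of_lt le_self_add hrc)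
    · have hsplit : v t + eVariationOn f (Set.Icc t w) = v w := by
        have := eVariationOn.Icc_add_Icc f (show a ≤ t from ht.1) h.le
          (show t ∈ Set.Icc a b from ht)
        rwa [Set.inter_eq_self_of_subset_right (Set.Icc_subset_Icc le_rfl ht.2),
          Set.inter_eq_self_of_subset_right (Set.Icc_subset_Icc ht.1 hw.2.2),
          Set.inter_eq_self_of_subset_right (Set.Icc_subset_Icc le_rfl hw.2.2)] at this
      have hW : eVariationOn f (Set.Icc t w) ≤ r := by
        apply hδP w hw.2 h.le
        have : dist w t < δ := hw.1
        rw [Real.dist_eq, abs_of_nonneg (by linarith)] at this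
        linarith
      calc v w = v t + eVariationOn f (Set.Icc t w) := hsplit.symm
        _ ≤ v t + r := add_le_add le_rfl hW
        _ < c := hrc

/-- If `μ(closedBall x s) ≤ C s²` for all small `s`, then for a closed curve of finite
positive length `ℓ`, the liminf as `r → 0⁺` of `μ(thickening r S)/r`, where `S` is the
image of the curve, is at most `2 C ℓ`. -/
theorem liminf_thickening_le_of_ball_bound
    {X : Type*} [MetricSpace X] [MeasurableSpace X] [BorelSpace X]
    (μ : MeasureTheory.Measure X)
    (C s₀ : ℝ) (hC : 0 < C) (hs₀ : 0 < s₀)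
    (hball : ∀ x : X, ∀ s : ℝ, 0 < s → s ≤ s₀ →
      μ (Metric.closedBall x s) ≤ ENNReal.ofReal (C * s ^ 2))
    (γ : ℝ → X) (hcont : ContinuousOn γ (Set.Icc 0 1)) (hclosed : γ 0 = γ 1)
    (hfin : eVariationOn γ (Set.Icc 0 1) ≠ ⊤)
    (hpos : 0 < eVariationOn γ (Set.Icc 0 1)) :
    Filter.liminf
      (fun r : ℝ => μ (Metric.thickening r (γ '' Set.Icc 0 1)) / ENNReal.ofReal r)
      (𝓝[>] 0)
    ≤ ENNReal.ofReal (2 * C) * eVariationOn γ (Set.Icc 0 1) := by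
  classical
  set S := γ '' Set.Icc 0 1 with hS
  set ℓ : ℝ≥0∞ := eVariationOn γ (Set.Icc 0 1) with hℓ
  set L : ℝ := ℓ.toReal with hLdef
  have hL0 : 0 ≤ L := ENNReal.toReal_nonneg
  have hofL : ENNReal.ofReal L = ℓ := ENNReal.ofReal_toReal hfin
  set v : ℝ → ℝ≥0∞ := fun x => eVariationOn γ (Set.Icc 0 x) with hv
  have hv0 : v 0 = 0 := by
    apply eVariationOn.subsingleton
    rw [Set.Icc_self]
    exact Set.subsingleton_singleton
  have hv1 : v 1 = ℓ := rfl
  have hvcont : ContinuousOn v (Set.Icc 0 1) := evar_continuousOn γ hfin hcont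
  have hivt : Set.Icc (v 0) (v 1) ⊆ v '' Set.Icc 0 1 :=
    intermediate_value_Icc (by norm_num) hvcont
  have hpair : ∀ x y : ℝ, x ∈ Set.Icc (0:ℝ) 1 → y ∈ Set.Icc (0:ℝ) 1 → x ≤ y →
      edist (γ y) (γ x) ≤ v y - v x := by
    intro x y hx hy hxy
    have hsplit : v x + eVariationOn γ (Set.Icc x y) = v y := by
      have := eVariationOn.Icc_add_Icc γ hx.1 hxy hx
      rwa [Set.inter_eq_self_of_subset_right (Set.Icc_subset_Icc le_rfl hx.2),
        Set.inter_eq_self_of_subset_right (Set.Icc_subset_Icc hx.1 hy.2),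
        Set.inter_eq_self_of_subset_right (Set.Icc_subset_Icc le_rfl hy.2)] at this
    have hed : edist (γ y) (γ x) ≤ eVariationOn γ (Set.Icc x y) :=
      eVariationOn.edist_le γ (Set.right_mem_Icc.mpr hxy) (Set.left_mem_Icc.mpr hxy)
    have hvxfin : v x ≠ ⊤ := fun h => hfin (top_le_iff.1
      (h ▸ eVariationOn.mono γ (Set.Icc_subset_Icc le_rfl hx.2)))
    exact hed.trans (ENNReal.le_sub_of_add_le_left hvxfin (le_of_eq hsplit))
  -- key bound for each small r
  have key : ∀ r : ℝ, 0 < r → 2*r ≤ s₀ →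
      μ (Metric.thickening r S) / ENNReal.ofReal r ≤ ENNReal.ofReal (2*C*L + 8*C*r) := by
    intro r hr hrs
    set N : ℕ := ⌈L / (2*r)⌉₊ with hN
    have hchoice : ∀ i : ℕ, ∃ t ∈ Set.Icc (0:ℝ) 1, v t = ENNReal.ofReal (min (2*r*i) L) := by
      intro i
      have hmem : ENNReal.ofReal (min (2*r*i) L) ∈ Set.Icc (v 0) (v 1) := by
        constructor
        · rw [hv0]; exact zero_le
        · rw [hv1, ← hofL]
          exact ENNReal.ofReal_le_ofReal (min_le_right _ _)
      obtain ⟨t, ht, hvt⟩ := hivt hmem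
      exact ⟨t, ht, hvt⟩
    choose τ hτmem hτval using hchoice
    have hcover : Metric.thickening r S ⊆
        ⋃ i ∈ Finset.range (N+1), Metric.closedBall (γ (τ i)) (2*r) := by
      intro y hy
      obtain ⟨z, hz, hyz⟩ := Metric.mem_thickening_iff.mp hy
      obtain ⟨t, ht, rfl⟩ := hz
      set m : ℝ := (v t).toReal with hm
      have hvtfin : v t ≠ ⊤ := fun h => hfin (top_le_iff.1
        (h ▸ eVariationOn.mono γ (Set.Icc_subset_Icc le_rfl ht.2)))
      have hofm : ENNReal.ofReal m = v t := ENNReal.ofReal_toReal hvtfin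
      have hm0 : 0 ≤ m := ENNReal.toReal_nonneg
      have hmL : m ≤ L := ENNReal.toReal_mono hfin
        (eVariationOn.mono γ (Set.Icc_subset_Icc le_rfl ht.2))
      set i : ℕ := ⌊(m + r) / (2*r)⌋₊ with hidef
      have h2r : (0:ℝ) < 2*r := by linarith
      have hLN : L ≤ 2*r*N := by
        have h1 : L/(2*r) ≤ (N:ℝ) := Nat.le_ceil _
        calc L = (L/(2*r))*(2*r) := by field_simp
          _ ≤ (N:ℝ)*(2*r) := by gcongr
          _ = 2*r*N := by ring
      have hiN : i ≤ N := by
        have hlt : (m + r)/(2*r) < (N:ℝ) + 1 := by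
          rw [div_lt_iff₀ h2r]
          nlinarith
        have : i < N + 1 := by
          rw [hidef]
          apply Nat.floor_lt (by positivity) |>.mpr
          push_cast
          exact hlt
        omega
      have hfl : 2*r*i ≤ m + r ∧ m + r < 2*r*i + 2*r := by
        constructor
        · have := Nat.floor_le (show (0:ℝ) ≤ (m+r)/(2*r) by positivity)
          rw [← hidef] at this
          calc 2*r*i ≤ 2*r*((m+r)/(2*r)) := by gcongr
            _ = m + r := by field_simp
        · have := Nat.lt_floor_add_one ((m+r)/(2*r))
          rw [← hidef] at this
          have h' : m + r < ((i:ℝ)+1)*(2*r) := by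
            rw [← div_lt_iff₀ h2r]
            exact this
          linarith [h']
      have hclose : |m - min (2*r*i) L| ≤ r := by
        rcases le_or_gt (2*r*i) L with h | h
        · rw [min_eq_left h, abs_le]
          constructor <;> linarith [hfl.1, hfl.2]
        · rw [min_eq_right h.le, abs_le]
          constructor <;> linarith [hfl.1, hfl.2, hmL]
      have hg0 : 0 ≤ min (2*r*(i:ℝ)) L := le_min (by positivity) hL0
      have hvτ : v (τ i) = ENNReal.ofReal (min (2*r*i) L) := hτval i
      have habs := abs_le.mp hclose
      have key2 : edist (γ t) (γ (τ i)) ≤ ENNReal.ofReal r := by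
        rcases le_total t (τ i) with h | h
        · rw [edist_comm]
          refine (hpair t (τ i) ht (hτmem i) h).trans ?_
          rw [hvτ, ← hofm, ← ENNReal.ofReal_sub _ hm0]
          apply ENNReal.ofReal_le_ofReal
          linarith [habs.1]
        · refine (hpair (τ i) t (hτmem i) ht h).trans ?_
          rw [hvτ, ← hofm, ← ENNReal.ofReal_sub _ hg0]
          apply ENNReal.ofReal_le_ofReal
          linarith [habs.2]
      have hdist : dist (γ t) (γ (τ i)) ≤ r := by
        rw [edist_dist] at key2
        exact (ENNReal.ofReal_le_ofReal_iff hr.le).mp key2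
      refine Set.mem_biUnion (Finset.mem_range.mpr (Nat.lt_succ_of_le hiN)) ?_
      rw [Metric.mem_closedBall]
      calc dist y (γ (τ i)) ≤ dist y (γ t) + dist (γ t) (γ (τ i)) := dist_triangle _ _ _
        _ ≤ r + r := add_le_add hyz.le hdist
        _ = 2*r := by ring
    have hμ : μ (Metric.thickening r S) ≤ (N+1 : ℕ) * ENNReal.ofReal (C * (2*r)^2) := by
      calc μ (Metric.thickening r S)
          ≤ μ (⋃ i ∈ Finset.range (N+1), Metric.closedBall (γ (τ i)) (2*r)) :=
            MeasureTheory.measure_mono hcover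
        _ ≤ ∑ i ∈ Finset.range (N+1), μ (Metric.closedBall (γ (τ i)) (2*r)) :=
            MeasureTheory.measure_biUnion_finset_le _ _
        _ ≤ ∑ _i ∈ Finset.range (N+1), ENNReal.ofReal (C * (2*r)^2) :=
            Finset.sum_le_sum fun i _ => hball _ _ (by linarith) hrs
        _ = (N+1 : ℕ) * ENNReal.ofReal (C * (2*r)^2) := by
            rw [Finset.sum_const, Finset.card_range, nsmul_eq_mul]
    apply ENNReal.div_le_of_le_mul
    have hNr : ((N:ℝ)+1) * (C*(2*r)^2) ≤ (2*C*L + 8*C*r) * r := by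
      have h1 : (N:ℝ) < L/(2*r) + 1 := Nat.ceil_lt_add_one (by positivity)
      have h2 : (N:ℝ)*(2*r) ≤ L + 2*r := by
        have := mul_le_mul_of_nonneg_right h1.le (show (0:ℝ) ≤ 2*r by linarith)
        rwa [add_mul, div_mul_cancel₀ _ (by linarith : (2:ℝ)*r ≠ 0), one_mul] at this
      nlinarith [mul_le_mul_of_nonneg_left h2 (show (0:ℝ) ≤ 2*C*r by positivity)]
    calc μ (Metric.thickening r S) ≤ (N+1 : ℕ) * ENNReal.ofReal (C * (2*r)^2) := hμ
      _ = ENNReal.ofReal ((N:ℝ)+1) * ENNReal.ofReal (C*(2*r)^2) := by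
          congr 1
          rw [← ENNReal.ofReal_natCast (N+1)]
          congr 1
          push_cast
          ring
      _ = ENNReal.ofReal (((N:ℝ)+1) * (C*(2*r)^2)) := (ENNReal.ofReal_mul (by positivity)).symm
      _ ≤ ENNReal.ofReal ((2*C*L + 8*C*r) * r) := ENNReal.ofReal_le_ofReal hNr
      _ = ENNReal.ofReal (2*C*L + 8*C*r) * ENNReal.ofReal r := ENNReal.ofReal_mul' hr.le
  -- conclude via liminf
  have hev : ∀ᶠ r in 𝓝[>] (0:ℝ),
      μ (Metric.thickening r S) / ENNReal.ofReal r ≤ ENNReal.ofReal (2*C*L + 8*C*r) := by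
    filter_upwards [Ioc_mem_nhdsGT_of_mem ⟨le_rfl, half_pos hs₀⟩] with r hr
    exact key r hr.1 (by linarith [hr.2])
  have hlim : Filter.Tendsto (fun r : ℝ => ENNReal.ofReal (2*C*L + 8*C*r)) (𝓝[>] (0:ℝ))
      (𝓝 (ENNReal.ofReal (2*C*L))) := by
    have h0 : Filter.Tendsto (fun r : ℝ => 2*C*L + 8*C*r) (𝓝[>] (0:ℝ)) (𝓝 (2*C*L)) := by
      have h1 : Filter.Tendsto (fun r : ℝ => 2*C*L + 8*C*r) (𝓝 (0:ℝ))
          (𝓝 (2*C*L + 8*C*0)) := by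
        apply Filter.Tendsto.add tendsto_const_nhds
        exact (continuous_const.mul continuous_id).tendsto 0
      simpa using h1.mono_left nhdsWithin_le_nhds
    exact (ENNReal.continuous_ofReal.tendsto _).comp h0
  calc Filter.liminf (fun r : ℝ => μ (Metric.thickening r S) / ENNReal.ofReal r) (𝓝[>] 0)
      ≤ Filter.liminf (fun r : ℝ => ENNReal.ofReal (2*C*L + 8*C*r)) (𝓝[>] 0) :=
        Filter.liminf_le_liminf hev
    _ = ENNReal.ofReal (2*C*L) := hlim.liminf_eq
    _ = ENNReal.ofReal (2*C) * ℓ := by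
        rw [← hofL, ← ENNReal.ofReal_mul (by positivity)]
end

section
/- Let X be a metric space in which every pair of points x, y is joined by a continuous path of length equal to dist x y (i.e., there is a continuous γ : [0,1] → X with γ(0) = x, γ(1) = y, and eVariationOn γ (Set.Icc 0 1) = ENNReal.ofReal (dist x y)). Then for every y ∈ X, every r > 0, and all points z₁, z₂ ∈ Metric.ball y (r/3), there exists a compact connected set P ⊆ Metric.ball y r with z₁ ∈ P and z₂ ∈ P. -/
/-- In a metric space where every pair of points is joined by a continuous path whose
length equals their distance, any two points of the ball `B(y, r/3)` are contained in a
continuum (compact connected set) inside the ball `B(y, r)`. -/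
theorem continuum_in_ball_of_geodesic
    {X : Type*} [MetricSpace X]
    (hgeo : ∀ x y : X, ∃ γ : ℝ → X, ContinuousOn γ (Set.Icc 0 1) ∧
      γ 0 = x ∧ γ 1 = y ∧
      eVariationOn γ (Set.Icc 0 1) = ENNReal.ofReal (dist x y)) :
    ∀ (y : X) (r : ℝ), 0 < r →
      ∀ z₁ ∈ Metric.ball y (r / 3), ∀ z₂ ∈ Metric.ball y (r / 3),
        ∃ P : Set X, IsCompact P ∧ IsConnected P ∧ P ⊆ Metric.ball y r ∧
          z₁ ∈ P ∧ z₂ ∈ P := by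
  intro y r hr z₁ hz₁ z₂ hz₂
  obtain ⟨γ, hcont, h0, h1, hvar⟩ := hgeo z₁ z₂
  refine ⟨γ '' Set.Icc 0 1, (isCompact_Icc.image_of_continuousOn hcont),
    ⟨⟨z₁, ⟨0, by simp, h0⟩⟩,
      ((isConnected_Icc (by norm_num)).image γ hcont).isPreconnected⟩, ?_,
    ⟨0, by simp, h0⟩, ⟨1, by simp, h1⟩⟩
  rintro _ ⟨t, ht, rfl⟩
  have hd : edist (γ t) z₁ ≤ ENNReal.ofReal (dist z₁ z₂) := by
    rw [← hvar, ← h0]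
    exact eVariationOn.edist_le γ ht (by simp : (0:ℝ) ∈ Set.Icc 0 1)
  have hdd : dist (γ t) z₁ ≤ dist z₁ z₂ := by
    rw [edist_dist] at hd
    exact (ENNReal.ofReal_le_ofReal_iff dist_nonneg).mp hd
  have : dist z₁ z₂ < 2 * (r / 3) := by
    calc dist z₁ z₂ ≤ dist z₁ y + dist y z₂ := dist_triangle _ _ _
    _ < r / 3 + r / 3 := by
        rw [Metric.mem_ball] at hz₁ hz₂
        rw [dist_comm y z₂]
        linarith
    _ = 2 * (r / 3) := by ring
  rw [Metric.mem_ball]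
  calc dist (γ t) y ≤ dist (γ t) z₁ + dist z₁ y := dist_triangle _ _ _
  _ < 2 * (r / 3) + r / 3 := by rw [Metric.mem_ball] at hz₁; linarith
  _ = r := by ring
end

section
/- Let X be a metric space in which every pair of points x, y is joined by a continuous path of length equal to dist x y, and let μ be a Borel measure on X. Suppose there are constants C > 0 and s₀ > 0 with μ(Metric.closedBall x s) ≤ C·s² for every x ∈ X and every 0 < s ≤ s₀. Let K ⊆ X be a nonempty compact set with μ(Metric.thickening s₀ K) < ∞ whose frontier is the image of a continuous closed curve γ : [0,1] → X (γ(0) = γ(1), frontier K = γ '' (Set.Icc 0 1)) of finite positive total variation ℓ = eVariationOn γ (Set.Icc 0 1). Then the outer Minkowski content of K satisfies liminf_{r → 0⁺} (μ(Metric.thickening r K) − μ(K))/r ≤ 2·C·ℓ. -/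
open scoped ENNReal Topology
open Set Filter MeasureTheory

private lemma myIccInter {a b c d : ℝ} (h1 : a ≤ c) (h2 : d ≤ b) :
    Icc a b ∩ Icc c d = Icc c d :=
  inter_eq_self_of_subset_right (Icc_subset_Icc h1 h2)

private lemma myEvarAdd {X : Type*} [PseudoEMetricSpace X] (f : ℝ → X) {a b c : ℝ}
    (hab : a ≤ b) (hbc : b ≤ c) :
    eVariationOn f (Icc a b) + eVariationOn f (Icc b c) = eVariationOn f (Icc a c) := by
  have h := eVariationOn.Icc_add_Icc f (s := Icc a c) hab hbc ⟨hab, hbc⟩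
  rwa [myIccInter le_rfl hbc, myIccInter hab le_rfl, inter_self] at h

private lemma myAuxRight {X : Type*} [PseudoEMetricSpace X] (f : ℝ → X) {a b : ℝ}
    (hab : a ≤ b) (hcont : ContinuousOn f (Icc a b))
    (hfin : eVariationOn f (Icc a b) ≠ ⊤) {ε : ℝ≥0∞} (hε : 0 < ε) :
    ∃ δ > (0:ℝ), ∀ t ∈ Icc a b, t ≤ a + δ → eVariationOn f (Icc a t) ≤ ε := by
  set W := eVariationOn f (Icc a b) with hWdef
  by_cases hWε : W ≤ ε
  · exact ⟨1, one_pos, fun t ht _ =>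
      le_trans (eVariationOn.mono f (Icc_subset_Icc le_rfl ht.2)) hWε⟩
  push_neg at hWε
  have hWtop : W ≠ ⊤ := hfin
  have hWpos : W ≠ 0 := (hε.trans hWε).ne'
  set ε2 := ε / 2 with hε2def
  have hε2pos : 0 < ε2 := ENNReal.div_pos hε.ne' (by norm_num)
  have hsub : W - ε2 < W := ENNReal.sub_lt_self hWtop hWpos hε2pos.ne'
  have hpart : W - ε2 < eVariationOn f (Icc a b) := hsub
  rw [eVariationOn, lt_iSup_iff] at hpart
  obtain ⟨⟨n, u, hu, us⟩, hsum⟩ := hpart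
  simp only at hsum
  -- continuity at a
  have hca : ContinuousWithinAt f (Icc a b) a := hcont a ⟨le_rfl, hab⟩
  have hev : f ⁻¹' (EMetric.ball (f a) ε2) ∈ 𝓝[Icc a b] a :=
    hca (EMetric.ball_mem_nhds _ hε2pos)
  obtain ⟨δ₀, hδ₀pos, hδ₀⟩ := Metric.mem_nhdsWithin_iff.1 hev
  by_cases hS : ∃ i ≤ n, a < u i
  swap
  · push_neg at hS
    have hz : ∑ i ∈ Finset.range n, edist (f (u (i + 1))) (f (u i)) = 0 := by
      refine Finset.sum_eq_zero fun i hi => ?_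
      have hi' : i < n := Finset.mem_range.1 hi
      have h1 : u i = a := le_antisymm (hS i hi'.le) (us i).1
      have h2 : u (i + 1) = a := le_antisymm (hS (i + 1) hi') (us (i + 1)).1
      rw [h1, h2, edist_self]
    rw [hz] at hsum
    exact absurd hsum (by simp)
  obtain ⟨i₀, hi₀n, hi₀⟩ := hS
  set F := (Finset.range (n + 1)).filter (fun i => a < u i) with hFdef
  have hFne : F.Nonempty := ⟨i₀, by
    simp only [hFdef, Finset.mem_filter, Finset.mem_range]
    exact ⟨Nat.lt_succ_of_le hi₀n, hi₀⟩⟩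
  set m := F.min' hFne with hmdef
  have hm : a < u m := (Finset.mem_filter.1 (F.min'_mem hFne)).2
  have hmin : ∀ i ≤ n, a < u i → u m ≤ u i := by
    intro i hin hai
    refine hu (F.min'_le i ?_)
    simp only [hFdef, Finset.mem_filter, Finset.mem_range]
    exact ⟨Nat.lt_succ_of_le hin, hai⟩
  set T := u m with hTdef
  have hTa : (0:ℝ) < T - a := by linarith [hm]
  refine ⟨min δ₀ (T - a) / 2, by positivity, fun t ht htδ => ?_⟩
  have htT : t < T := by
    have h2 := min_le_right δ₀ (T - a)
    linarith
  have htδ₀ : edist (f t) (f a) < ε2 := by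
    have hm1 : dist t a < δ₀ := by
      rw [Real.dist_eq, abs_of_nonneg (by linarith [ht.1])]
      have := min_le_left δ₀ (T - a)
      linarith
    exact hδ₀ ⟨Metric.mem_ball.2 hm1, ht⟩
  -- new partition for Icc t b
  set w : ℕ → ℝ := fun i => max (u i) t with hwdef
  have hwmono : Monotone w := fun i j hij => max_le_max (hu hij) le_rfl
  have hws : ∀ i, w i ∈ Icc t b := fun i => ⟨le_max_right _ _, max_le (us i).2 ht.2⟩
  have hB : ∑ i ∈ Finset.range n, edist (f (w (i + 1))) (f (w i))
      ≤ eVariationOn f (Icc t b) := eVariationOn.sum_le (f := f) (n := n) hwmono hws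
  set c : ℕ → ℝ≥0∞ := fun i => if u i < t ∧ t < u (i + 1) then ε2 else 0 with hcdef
  have hua : ∀ i ≤ n, u i < t → u i = a := by
    intro i hin hit
    by_contra h
    have hai : a < u i := lt_of_le_of_ne (us i).1 (Ne.symm h)
    have := hmin i hin hai
    linarith
  have hkey : ∀ i ∈ Finset.range n, edist (f (u (i + 1))) (f (u i))
      ≤ edist (f (w (i + 1))) (f (w i)) + c i := by
    intro i hi
    have hin : i < n := Finset.mem_range.1 hi
    rcases le_or_gt t (u i) with hti | hti
    · have hwi : w i = u i := max_eq_left hti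
      have hwi1 : w (i + 1) = u (i + 1) := max_eq_left (hti.trans (hu (Nat.le_succ i)))
      rw [hwi, hwi1]
      exact le_add_right le_rfl
    · have hui : u i = a := hua i hin.le hti
      rcases le_or_gt (u (i + 1)) t with h1 | h1
      · -- u (i+1) < t, since = t is impossible
        have h1' : u (i + 1) < t := by
          rcases lt_or_eq_of_le h1 with h | h
          · exact h
          · exfalso
            have hat : a < t := hui ▸ hti
            have : a < u (i + 1) := by rw [h]; exact hat
            have := hmin (i + 1) hin this
            rw [h] at this
            linarith
        have h2 : u (i + 1) = a := hua (i + 1) hin h1'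
        rw [hui, h2, edist_self]
        exact zero_le
      · have hwi : w i = t := max_eq_right hti.le
        have hwi1 : w (i + 1) = u (i + 1) := max_eq_left h1.le
        have hc : c i = ε2 := if_pos ⟨hti, h1⟩
        rw [hui, hwi, hwi1, hc]
        calc edist (f (u (i + 1))) (f a)
            ≤ edist (f (u (i + 1))) (f t) + edist (f t) (f a) := edist_triangle _ _ _
          _ ≤ edist (f (u (i + 1))) (f t) + ε2 := add_le_add_right htδ₀.le _
  have huniq : ∀ i j, i < n → j < n → (u i < t ∧ t < u (i + 1)) →
      (u j < t ∧ t < u (j + 1)) → i = j := by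
    intro i j _ _ hi hj
    rcases lt_trichotomy i j with h | h | h
    · exfalso; have := hu (Nat.succ_le_of_lt h); linarith [hi.2, hj.1]
    · exact h
    · exfalso; have := hu (Nat.succ_le_of_lt h); linarith [hj.2, hi.1]
  have hsumc : ∑ i ∈ Finset.range n, c i ≤ ε2 := by
    by_cases hex : ∃ j ∈ Finset.range n, u j < t ∧ t < u (j + 1)
    · obtain ⟨j₀, hj₀, hcond⟩ := hex
      have : ∑ i ∈ Finset.range n, c i = c j₀ :=
        Finset.sum_eq_single_of_mem j₀ hj₀ (fun j hj hne => if_neg (fun hcj =>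
          hne (huniq j j₀ (Finset.mem_range.1 hj) (Finset.mem_range.1 hj₀) hcj hcond)))
      rw [this, hcdef]
      simp only [if_pos hcond, le_refl]
    · push_neg at hex
      have : ∑ i ∈ Finset.range n, c i = 0 :=
        Finset.sum_eq_zero fun i hi => if_neg (fun hc => absurd hc.2 (not_lt.2 (hex i hi hc.1)))
      simp [this]
  have hstep : W - ε2 ≤ eVariationOn f (Icc t b) + ε2 := by
    calc W - ε2 ≤ ∑ i ∈ Finset.range n, edist (f (u (i + 1))) (f (u i)) := hsum.le
      _ ≤ ∑ i ∈ Finset.range n, (edist (f (w (i + 1))) (f (w i)) + c i) :=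
          Finset.sum_le_sum hkey
      _ = (∑ i ∈ Finset.range n, edist (f (w (i + 1))) (f (w i)))
          + ∑ i ∈ Finset.range n, c i := Finset.sum_add_distrib
      _ ≤ eVariationOn f (Icc t b) + ε2 := add_le_add hB hsumc
  have hW2 : W ≤ eVariationOn f (Icc t b) + ε := by
    have := tsub_le_iff_right.1 hstep
    rwa [add_assoc, hε2def, ENNReal.add_halves] at this
  have hWadd : eVariationOn f (Icc a t) + eVariationOn f (Icc t b) = W :=
    myEvarAdd f ht.1 ht.2
  have hBfin : eVariationOn f (Icc t b) ≠ ⊤ :=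
    ne_top_of_le_ne_top hWtop (eVariationOn.mono f (Icc_subset_Icc ht.1 le_rfl))
  have hfinal : eVariationOn f (Icc a t) + eVariationOn f (Icc t b)
      ≤ ε + eVariationOn f (Icc t b) := by
    rw [hWadd, add_comm ε]
    exact hW2
  exact (ENNReal.add_le_add_iff_right hBfin).1 hfinal

private lemma myAuxLeft {X : Type*} [PseudoEMetricSpace X] (f : ℝ → X) {a b : ℝ}
    (hab : a ≤ b) (hcont : ContinuousOn f (Icc a b))
    (hfin : eVariationOn f (Icc a b) ≠ ⊤) {ε : ℝ≥0∞} (hε : 0 < ε) :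
    ∃ δ > (0:ℝ), ∀ t ∈ Icc a b, b - δ ≤ t → eVariationOn f (Icc t b) ≤ ε := by
  set φ : ℝ → ℝ := fun x => a + b - x with hφdef
  have hφanti : ∀ s : Set ℝ, AntitoneOn φ s := fun s x _ y _ hxy => by
    simp only [hφdef]; linarith
  have himg : ∀ c d : ℝ, φ '' Icc c d = Icc (a + b - d) (a + b - c) := fun c d => by
    simpa only [hφdef] using Set.image_const_sub_Icc (a + b) c d
  set g : ℝ → X := f ∘ φ with hgdef
  have hφmaps : ∀ x ∈ Icc a b, φ x ∈ Icc a b := fun x hx =>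
    ⟨by simp only [hφdef]; linarith [hx.2], by simp only [hφdef]; linarith [hx.1]⟩
  have hgcont : ContinuousOn g (Icc a b) :=
    hcont.comp ((continuous_const.sub continuous_id).continuousOn) hφmaps
  have hgvar : eVariationOn g (Icc a b) = eVariationOn f (Icc a b) := by
    rw [hgdef, eVariationOn.comp_eq_of_antitoneOn f φ (hφanti _), himg a b]
    norm_num
  obtain ⟨δ, hδ, hδprop⟩ := myAuxRight g hab hgcont (hgvar ▸ hfin) hε
  refine ⟨δ, hδ, fun t ht htb => ?_⟩
  have h1 : a + b - t ∈ Icc a b := ⟨by linarith [ht.2], by linarith [ht.1]⟩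
  have h2 : a + b - t ≤ a + δ := by linarith
  have h := hδprop (a + b - t) h1 h2
  have h3 : eVariationOn g (Icc a (a + b - t)) = eVariationOn f (Icc t b) := by
    rw [hgdef, eVariationOn.comp_eq_of_antitoneOn f φ (hφanti _), himg a (a + b - t)]
    norm_num
  rwa [h3] at h

private lemma myVCont {X : Type*} [PseudoEMetricSpace X] (f : ℝ → X)
    (hcont : ContinuousOn f (Icc 0 1)) (hfin : eVariationOn f (Icc 0 1) ≠ ⊤) :
    ContinuousOn (fun t => (eVariationOn f (Icc 0 t)).toReal) (Icc 0 1) := by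
  have hfin1 : ∀ c d : ℝ, 0 ≤ c → d ≤ 1 → eVariationOn f (Icc c d) ≠ ⊤ := fun c d hc hd =>
    ne_top_of_le_ne_top hfin (eVariationOn.mono f (Icc_subset_Icc hc hd))
  intro a ha
  rw [Metric.continuousWithinAt_iff]
  intro ε hε
  have hε2 : (0:ℝ≥0∞) < ENNReal.ofReal (ε / 2) := ENNReal.ofReal_pos.2 (by linarith)
  obtain ⟨δ₁, hδ₁, h₁⟩ := myAuxRight f ha.2 (hcont.mono (Icc_subset_Icc ha.1 le_rfl))
    (hfin1 a 1 ha.1 le_rfl) hε2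
  obtain ⟨δ₂, hδ₂, h₂⟩ := myAuxLeft f ha.1 (hcont.mono (Icc_subset_Icc le_rfl ha.2))
    (hfin1 0 a le_rfl ha.2) hε2
  refine ⟨min δ₁ δ₂, lt_min hδ₁ hδ₂, fun x hx hdist => ?_⟩
  rw [Real.dist_eq] at hdist
  rcases le_total a x with hax | hax
  · have hxδ : x ≤ a + δ₁ := by
      have h' : x - a < δ₁ := lt_of_le_of_lt (le_abs_self _)
        (lt_of_lt_of_le hdist (min_le_left _ _))
      linarith
    have hvar := h₁ x ⟨hax, hx.2⟩ hxδ
    have hadd := myEvarAdd f ha.1 hax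
    have heq : (eVariationOn f (Icc 0 x)).toReal
        = (eVariationOn f (Icc 0 a)).toReal + (eVariationOn f (Icc a x)).toReal := by
      rw [← hadd, ENNReal.toReal_add (hfin1 0 a le_rfl ha.2) (hfin1 a x ha.1 hx.2)]
    have htr : (eVariationOn f (Icc a x)).toReal ≤ ε / 2 := by
      have h5 := ENNReal.toReal_mono ENNReal.ofReal_ne_top hvar
      rwa [ENNReal.toReal_ofReal (by linarith)] at h5
    rw [Real.dist_eq, heq]
    rw [add_sub_cancel_left, abs_of_nonneg ENNReal.toReal_nonneg]
    linarith
  · have hxδ : a - δ₂ ≤ x := by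
      have h' : a - x < δ₂ := lt_of_le_of_lt (le_trans (by rw [abs_sub_comm]; exact le_abs_self _) le_rfl)
        (lt_of_lt_of_le hdist (min_le_right _ _))
      linarith
    have hvar := h₂ x ⟨hx.1, hax⟩ hxδ
    have hadd := myEvarAdd f hx.1 hax
    have heq : (eVariationOn f (Icc 0 a)).toReal
        = (eVariationOn f (Icc 0 x)).toReal + (eVariationOn f (Icc x a)).toReal := by
      rw [← hadd, ENNReal.toReal_add (hfin1 0 x le_rfl (hax.trans ha.2)) (hfin1 x a hx.1 ha.2)]
    have htr : (eVariationOn f (Icc x a)).toReal ≤ ε / 2 := by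
      have h5 := ENNReal.toReal_mono ENNReal.ofReal_ne_top hvar
      rwa [ENNReal.toReal_ofReal (by linarith)] at h5
    rw [Real.dist_eq, heq]
    rw [sub_add_cancel_left, abs_neg, abs_of_nonneg ENNReal.toReal_nonneg]
    linarith

private lemma myCross {X : Type*} [MetricSpace X]
    (hgeo : ∀ x y : X, ∃ γ : ℝ → X, ContinuousOn γ (Set.Icc 0 1) ∧
      γ 0 = x ∧ γ 1 = y ∧
      eVariationOn γ (Set.Icc 0 1) = ENNReal.ofReal (dist x y))
    (K : Set X) {r : ℝ} (hr : 0 < r) :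
    Metric.thickening r K ⊆ K ∪ Metric.thickening r (frontier K) := by
  intro x hx
  by_cases hxK : x ∈ K
  · exact Or.inl hxK
  right
  obtain ⟨y, hyK, hxy⟩ := Metric.mem_thickening_iff.1 hx
  by_cases hxc : x ∈ closure K
  · have hxf : x ∈ frontier K := ⟨hxc, fun h => hxK (interior_subset h)⟩
    exact Metric.mem_thickening_iff.2 ⟨x, hxf, by simpa using hr⟩
  obtain ⟨p, hpc, hp0, hp1, hpvar⟩ := hgeo x y
  have hSconn : IsPreconnected (p '' Icc 0 1) := (isPreconnected_Icc).image p hpc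
  have hy_mem : y ∈ p '' Icc 0 1 := ⟨1, ⟨zero_le_one, le_rfl⟩, hp1⟩
  have hx_mem : x ∈ p '' Icc 0 1 := ⟨0, ⟨le_rfl, zero_le_one⟩, hp0⟩
  have hfr : (p '' Icc 0 1 ∩ frontier K).Nonempty := by
    by_contra hemp
    rw [Set.not_nonempty_iff_eq_empty] at hemp
    have hdisj : ∀ z ∈ p '' Icc 0 1, z ∉ frontier K := fun z hz hzf =>
      (Set.eq_empty_iff_forall_notMem.1 hemp z) ⟨hz, hzf⟩
    have hsub : p '' Icc 0 1 ⊆ interior K ∪ (closure K)ᶜ := by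
      intro z hz
      by_cases h : z ∈ closure K
      · left
        rw [← closure_diff_frontier]
        exact ⟨h, hdisj z hz⟩
      · exact Or.inr h
    have h1 : (p '' Icc 0 1 ∩ interior K).Nonempty := by
      refine ⟨y, hy_mem, ?_⟩
      rw [← closure_diff_frontier]
      exact ⟨subset_closure hyK, hdisj y hy_mem⟩
    have h2 : (p '' Icc 0 1 ∩ (closure K)ᶜ).Nonempty := ⟨x, hx_mem, hxc⟩
    obtain ⟨z, _, hzi, hzc⟩ := hSconn _ _ isOpen_interior
      (isOpen_compl_iff.2 isClosed_closure) hsub h1 h2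
    exact hzc (subset_closure (interior_subset hzi))
  obtain ⟨z, ⟨t₀, ht₀, rfl⟩, hzf⟩ := hfr
  have hed : edist x (p t₀) ≤ ENNReal.ofReal (dist x y) := by
    calc edist x (p t₀) = edist (p 0) (p t₀) := by rw [hp0]
      _ ≤ eVariationOn p (Icc 0 1) := eVariationOn.edist_le p ⟨le_rfl, zero_le_one⟩ ht₀
      _ = _ := hpvar
  have hdd : dist x (p t₀) ≤ dist x y := by
    rw [edist_dist] at hed
    exact (ENNReal.ofReal_le_ofReal_iff dist_nonneg).1 hed
  exact Metric.mem_thickening_iff.2 ⟨p t₀, hzf, lt_of_le_of_lt hdd hxy⟩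

/-- In a metric space where every pair of points is joined by a continuous path whose
length equals their distance, carrying a Borel measure with `μ(closedBall x s) ≤ C s²`
for `0 < s ≤ s₀`: if `K` is a nonempty compact set of finite thickened measure whose
frontier is the image of a continuous closed curve of finite positive length `ℓ`, then
the outer Minkowski content of `K`, i.e. the liminf as `r → 0⁺` of
`(μ(thickening r K) − μ(K))/r`, is at most `2 C ℓ`. -/
theorem outer_minkowski_content_le_of_boundary_curve
    {X : Type*} [MetricSpace X] [MeasurableSpace X] [BorelSpace X]
    (hgeo : ∀ x y : X, ∃ γ : ℝ → X, ContinuousOn γ (Set.Icc 0 1) ∧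
      γ 0 = x ∧ γ 1 = y ∧
      eVariationOn γ (Set.Icc 0 1) = ENNReal.ofReal (dist x y))
    (μ : MeasureTheory.Measure X)
    (C s₀ : ℝ) (hC : 0 < C) (hs₀ : 0 < s₀)
    (hball : ∀ x : X, ∀ s : ℝ, 0 < s → s ≤ s₀ →
      μ (Metric.closedBall x s) ≤ ENNReal.ofReal (C * s ^ 2))
    (K : Set X) (hKne : K.Nonempty) (hKcomp : IsCompact K)
    (hKfin : μ (Metric.thickening s₀ K) < ⊤)
    (γ : ℝ → X) (hcont : ContinuousOn γ (Set.Icc 0 1)) (hclosed : γ 0 = γ 1)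
    (hfront : frontier K = γ '' Set.Icc 0 1)
    (hfin : eVariationOn γ (Set.Icc 0 1) ≠ ⊤)
    (hpos : 0 < eVariationOn γ (Set.Icc 0 1)) :
    Filter.liminf
      (fun r : ℝ => (μ (Metric.thickening r K) - μ K) / ENNReal.ofReal r)
      (𝓝[>] 0)
    ≤ ENNReal.ofReal (2 * C) * eVariationOn γ (Set.Icc 0 1) := by
  set L : ℝ := (eVariationOn γ (Set.Icc 0 1)).toReal with hLdef
  have hL0 : 0 ≤ L := ENNReal.toReal_nonneg
  set V : ℝ → ℝ := fun t => (eVariationOn γ (Set.Icc 0 t)).toReal with hVdef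
  have hVcont : ContinuousOn V (Icc 0 1) := myVCont γ hcont hfin
  have hfin1 : ∀ c d : ℝ, 0 ≤ c → d ≤ 1 → eVariationOn γ (Icc c d) ≠ ⊤ := fun c d hc hd =>
    ne_top_of_le_ne_top hfin (eVariationOn.mono γ (Icc_subset_Icc hc hd))
  have hV0 : V 0 = 0 := by
    have : eVariationOn γ (Icc (0:ℝ) 0) = 0 := by
      apply eVariationOn.subsingleton
      rw [Set.Icc_self]
      exact Set.subsingleton_singleton
    simp [hVdef, this]
  have hVle : ∀ t ∈ Icc (0:ℝ) 1, V t ≤ L := fun t ht =>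
    ENNReal.toReal_mono hfin (eVariationOn.mono γ (Icc_subset_Icc le_rfl ht.2))
  have hedist : ∀ s t : ℝ, s ∈ Icc (0:ℝ) 1 → t ∈ Icc (0:ℝ) 1 → s ≤ t →
      edist (γ s) (γ t) ≤ ENNReal.ofReal (V t - V s) := by
    intro s t hs ht hst
    have hadd := myEvarAdd γ hs.1 hst
    have heq : V t - V s = (eVariationOn γ (Icc s t)).toReal := by
      have h2 : V t = V s + (eVariationOn γ (Icc s t)).toReal := by
        simp only [hVdef]
        rw [← hadd, ENNReal.toReal_add (hfin1 0 s le_rfl (hst.trans ht.2))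
          (hfin1 s t hs.1 ht.2)]
      rw [h2]; ring
    rw [heq, ENNReal.ofReal_toReal (hfin1 s t hs.1 ht.2)]
    exact eVariationOn.edist_le γ ⟨le_rfl, hst⟩ ⟨hst, le_rfl⟩
  have hmain : ∀ r : ℝ, 0 < r → 2 * r ≤ s₀ →
      (μ (Metric.thickening r K) - μ K) / ENNReal.ofReal r
        ≤ ENNReal.ofReal (2 * C * L + 4 * C * r) := by
    intro r hr hr2
    have h2r : (0:ℝ) < 2 * r := by linarith
    have h1 : μ (Metric.thickening r K) - μ K
        ≤ μ (Metric.thickening r (γ '' Set.Icc 0 1)) := by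
      rw [← hfront, tsub_le_iff_left]
      exact (measure_mono (myCross hgeo K hr)).trans (measure_union_le _ _)
    set N : ℕ := ⌊L / (2 * r)⌋₊ + 1 with hN
    have hIVT := intermediate_value_Icc (zero_le_one' ℝ) hVcont
    have hτ : ∀ k : ℕ, ∃ τ ∈ Icc (0:ℝ) 1, V τ = min ((2 * k + 1) * r) L := by
      intro k
      have hmem : min ((2 * (k:ℝ) + 1) * r) L ∈ Icc (V 0) (V 1) := by
        constructor
        · rw [hV0]; exact le_min (by positivity) hL0
        · exact min_le_right _ _
      exact hIVT hmem
    choose τ hτmem hτval using hτ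
    have hcover : γ '' Icc 0 1 ⊆ ⋃ k ∈ Finset.range N, Metric.closedBall (γ (τ k)) r := by
      rintro z ⟨t, ht, rfl⟩
      have hw0 : 0 ≤ V t := ENNReal.toReal_nonneg
      have hwL : V t ≤ L := hVle t ht
      set k := ⌊V t / (2 * r)⌋₊ with hk
      have hkN : k < N := by
        have hle : k ≤ ⌊L / (2 * r)⌋₊ := Nat.floor_mono (by gcongr)
        omega
      have hfl : (k:ℝ) ≤ V t / (2 * r) := Nat.floor_le (by positivity)
      have hlow : 2 * (k:ℝ) * r ≤ V t := by
        have := (le_div_iff₀ h2r).1 hfl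
        linarith
      have hup : V t < (2 * (k:ℝ) + 2) * r := by
        have h3 := (div_lt_iff₀ h2r).1 (Nat.lt_floor_add_one (V t / (2 * r)))
        nlinarith
      have habs : |V t - V (τ k)| ≤ r := by
        rw [hτval k]
        rcases le_total ((2 * (k:ℝ) + 1) * r) L with hc | hc
        · rw [min_eq_left hc, abs_le]
          constructor <;> nlinarith
        · rw [min_eq_right hc, abs_le]
          constructor <;> nlinarith
      have hdist : dist (γ t) (γ (τ k)) ≤ r := by
        rcases le_total t (τ k) with h | h
        · have hh := (hedist t (τ k) ht (hτmem k) h).trans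
            (ENNReal.ofReal_le_ofReal (le_trans (le_trans (le_abs_self _)
              (by rw [abs_sub_comm])) habs))
          rw [edist_dist] at hh
          exact (ENNReal.ofReal_le_ofReal_iff hr.le).1 hh
        · have hh := (hedist (τ k) t (hτmem k) ht h).trans
            (ENNReal.ofReal_le_ofReal (le_trans (le_abs_self _) habs))
          rw [edist_dist, dist_comm] at hh
          exact (ENNReal.ofReal_le_ofReal_iff hr.le).1 hh
      exact Set.mem_iUnion₂.2 ⟨k, Finset.mem_range.2 hkN, Metric.mem_closedBall.2 hdist⟩
    have hthick : Metric.thickening r (γ '' Icc 0 1) ⊆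
        ⋃ k ∈ Finset.range N, Metric.closedBall (γ (τ k)) (2 * r) := by
      intro x hx
      obtain ⟨z, hz, hxz⟩ := Metric.mem_thickening_iff.1 hx
      obtain ⟨k, hk, hzk⟩ := Set.mem_iUnion₂.1 (hcover hz)
      refine Set.mem_iUnion₂.2 ⟨k, hk, Metric.mem_closedBall.2 ?_⟩
      rw [Metric.mem_closedBall] at hzk
      calc dist x (γ (τ k)) ≤ dist x z + dist z (γ (τ k)) := dist_triangle _ _ _
        _ ≤ r + r := add_le_add hxz.le hzk
        _ = 2 * r := by ring
    have hmeas : μ (Metric.thickening r (γ '' Set.Icc 0 1))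
        ≤ (N : ℝ≥0∞) * ENNReal.ofReal (C * (2 * r) ^ 2) := by
      calc μ (Metric.thickening r (γ '' Set.Icc 0 1))
          ≤ μ (⋃ k ∈ Finset.range N, Metric.closedBall (γ (τ k)) (2 * r)) :=
            measure_mono hthick
        _ ≤ ∑ k ∈ Finset.range N, μ (Metric.closedBall (γ (τ k)) (2 * r)) :=
            measure_biUnion_finset_le _ _
        _ ≤ ∑ _k ∈ Finset.range N, ENNReal.ofReal (C * (2 * r) ^ 2) :=
            Finset.sum_le_sum fun k _ => hball _ _ h2r hr2
        _ = (N : ℝ≥0∞) * ENNReal.ofReal (C * (2 * r) ^ 2) := by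
            rw [Finset.sum_const, Finset.card_range, nsmul_eq_mul]
    have harith : (N : ℝ≥0∞) * ENNReal.ofReal (C * (2 * r) ^ 2)
        ≤ ENNReal.ofReal (r * (2 * C * L + 4 * C * r)) := by
      rw [← ENNReal.ofReal_natCast N, ← ENNReal.ofReal_mul (by positivity)]
      apply ENNReal.ofReal_le_ofReal
      have hNle : (N:ℝ) ≤ L / (2 * r) + 1 := by
        rw [hN]
        push_cast
        have := Nat.floor_le (by positivity : 0 ≤ L / (2 * r))
        linarith
      calc (N:ℝ) * (C * (2 * r) ^ 2)
          ≤ (L / (2 * r) + 1) * (C * (2 * r) ^ 2) :=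
            mul_le_mul_of_nonneg_right hNle (by positivity)
        _ = r * (2 * C * L + 4 * C * r) := by
            field_simp
            ring
    have hfinal : μ (Metric.thickening r K) - μ K
        ≤ ENNReal.ofReal (r * (2 * C * L + 4 * C * r)) :=
      h1.trans (hmeas.trans harith)
    calc (μ (Metric.thickening r K) - μ K) / ENNReal.ofReal r
        ≤ ENNReal.ofReal (r * (2 * C * L + 4 * C * r)) / ENNReal.ofReal r :=
          ENNReal.div_le_div_right hfinal _
      _ = ENNReal.ofReal (2 * C * L + 4 * C * r) := by
          rw [ENNReal.ofReal_mul hr.le, mul_comm, mul_div_assoc,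
            ENNReal.div_self (ENNReal.ofReal_pos.2 hr).ne' ENNReal.ofReal_ne_top, mul_one]
  have hkey : ENNReal.ofReal (2 * C) * eVariationOn γ (Set.Icc 0 1)
      = ENNReal.ofReal (2 * C * L) := by
    conv_lhs => rw [show eVariationOn γ (Set.Icc 0 1) = ENNReal.ofReal L from
      (ENNReal.ofReal_toReal hfin).symm]
    rw [← ENNReal.ofReal_mul (by positivity : (0:ℝ) ≤ 2 * C)]
  rw [hkey]
  apply ENNReal.le_of_forall_pos_le_add
  intro ε hε _
  apply Filter.liminf_le_of_frequently_le'
  have hεR : (0:ℝ) < (ε:ℝ) := hε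
  have hδ : 0 < min (s₀ / 2) ((ε:ℝ) / (4 * C)) := lt_min (by linarith) (by positivity)
  have hev : ∀ᶠ r in 𝓝[>] (0:ℝ),
      (μ (Metric.thickening r K) - μ K) / ENNReal.ofReal r
        ≤ ENNReal.ofReal (2 * C * L) + (ε : ℝ≥0∞) := by
    filter_upwards [Ioc_mem_nhdsGT_of_mem ⟨le_refl (0:ℝ), hδ⟩] with r hr
    obtain ⟨hr0, hrle⟩ := hr
    have hr2 : 2 * r ≤ s₀ := by
      have := hrle.trans (min_le_left _ _)
      linarith
    refine (hmain r hr0 hr2).trans ?_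
    have h4 : 4 * C * r ≤ (ε:ℝ) := by
      have h5 : r ≤ (ε:ℝ) / (4 * C) := hrle.trans (min_le_right _ _)
      rw [le_div_iff₀ (by positivity)] at h5
      linarith
    calc ENNReal.ofReal (2 * C * L + 4 * C * r)
        ≤ ENNReal.ofReal (2 * C * L + (ε:ℝ)) := ENNReal.ofReal_le_ofReal (by linarith)
      _ ≤ ENNReal.ofReal (2 * C * L) + ENNReal.ofReal (ε:ℝ) := ENNReal.ofReal_add_le
      _ = ENNReal.ofReal (2 * C * L) + (ε : ℝ≥0∞) := by rw [ENNReal.ofReal_coe_nnreal]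
  exact hev.frequently
end
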